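/- arXiv:1209.1162 — 5 statements merged into one kernel-verified Lean document; each statement's English description precedes it below -/
import Mathlib

section
/- In the braid group B_n, the Birman–Ko–Lee generators β_{i,j} and β_{k,l} commute whenever 1 ≤ i < j < k < l ≤ n (disjoint indices) or 1 ≤ i < k < l < j ≤ n (nested indices). -/
/-- Braid relations on generators σ_1, ..., σ_{n-1} (indexed by `Fin (n-1)`, 0-based):
σ_i σ_j = σ_j σ_i for |i-j| ≥ 2 and σ_i σ_{i+1} σ_i = σ_{i+1} σ_i σ_{i+1}. -/
def braidRels (n : ℕ) : Set (FreeGroup (Fin (n - 1))) :=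
  {r | (∃ i j : Fin (n - 1), (i : ℕ) + 2 ≤ (j : ℕ) ∧
          r = FreeGroup.of i * FreeGroup.of j * (FreeGroup.of i)⁻¹ * (FreeGroup.of j)⁻¹) ∨
       (∃ i j : Fin (n - 1), (j : ℕ) = (i : ℕ) + 1 ∧
          r = FreeGroup.of i * FreeGroup.of j * FreeGroup.of i *
              (FreeGroup.of j * FreeGroup.of i * FreeGroup.of j)⁻¹)}

/-- The braid group B_n. -/
abbrev BraidGroup (n : ℕ) : Type _ := PresentedGroup (braidRels n)

/-- The braid generator σ_k (1-based index, so `1 ≤ k ≤ n-1`). -/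
def braidGen (n k : ℕ) : BraidGroup n :=
  if h : k - 1 < n - 1 then PresentedGroup.of (⟨k - 1, h⟩ : Fin (n - 1)) else 1

/-- The Birman–Ko–Lee generator
β_{i,j} = (σ_{i+1} ⋯ σ_{j-1})⁻¹ σ_i (σ_{i+1} ⋯ σ_{j-1}) (1-based, `1 ≤ i < j ≤ n`). -/
def bkl (n i j : ℕ) : BraidGroup n :=
  (((List.range (j - 1 - i)).map fun t => braidGen n (i + 1 + t)).prod)⁻¹ *
    braidGen n i *
    ((List.range (j - 1 - i)).map fun t => braidGen n (i + 1 + t)).prod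

/-! Write `β_{i,j} = w⁻¹ σ_i w` with `w = σ_{i+1} ⋯ σ_{j-1}`. In the disjoint case every letter
of `β_{i,j}` is at distance at least two from every letter of `β_{k,l}`, so the far commutation
relations suffice. In the nested case, the braid relation shows `w σ_m w⁻¹ = σ_{m+1}` for
`i < m < j - 1`; since `σ_{m+1}` commutes with `σ_i`, each `σ_m` with `k ≤ m < l` commutes with
`β_{i,j}`, hence so does `β_{k,l}`. -/

lemma braidGen_eq_of {n k : ℕ} (h : k - 1 < n - 1) :
    braidGen n k = PresentedGroup.of (⟨k - 1, h⟩ : Fin (n - 1)) :=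
  dif_pos h

lemma braidGen_commute {n a b : ℕ} (ha : 1 ≤ a) (hab : a + 2 ≤ b) :
    Commute (braidGen n a) (braidGen n b) := by
  by_cases hb : b - 1 < n - 1
  · have hrel := PresentedGroup.one_of_mem (rels := braidRels n)
      (Or.inl ⟨⟨a - 1, by omega⟩, ⟨b - 1, hb⟩, by simp; omega, rfl⟩)
    rw [braidGen_eq_of hb, braidGen_eq_of (by omega)]
    exact commutatorElement_eq_one_iff_commute.mp hrel
  · simp [braidGen, hb]

lemma braidGen_braid {n a : ℕ} (ha : 1 ≤ a) (han : a + 2 ≤ n) :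
    braidGen n a * braidGen n (a + 1) * braidGen n a =
      braidGen n (a + 1) * braidGen n a * braidGen n (a + 1) := by
  have hrel := PresentedGroup.one_of_mem (rels := braidRels n)
    (Or.inr ⟨⟨a - 1, by omega⟩, ⟨a + 1 - 1, by omega⟩, by simp; omega, rfl⟩)
  rw [braidGen_eq_of (k := a) (by omega), braidGen_eq_of (k := a + 1) (by omega)]
  exact mul_inv_eq_one.mp hrel

theorem Commute.inv_mul_mul_of_semiconjBy {G : Type*} [Group G] {a b x y : G}
    (hxy : SemiconjBy a x y) (hyb : Commute y b) : Commute x (a⁻¹ * b * a) :=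
  ((SemiconjBy.inv_symm_left_iff.mpr hxy).mul_left hyb.symm).mul_left hxy |>.symm

def braidChain (n a len : ℕ) : BraidGroup n :=
  ((List.range len).map fun t => braidGen n (a + t)).prod

lemma bkl_eq_conj_braidChain (n i j : ℕ) :
    bkl n i j = (braidChain n (i + 1) (j - 1 - i))⁻¹ * braidGen n i *
      braidChain n (i + 1) (j - 1 - i) :=
  rfl

lemma braidChain_add (n a p q : ℕ) :
    braidChain n a (p + q) = braidChain n a p * braidChain n (a + p) q := by
  simp only [braidChain, List.range_add, List.map_append, List.prod_append, List.map_map,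
    Function.comp_def, Nat.add_assoc]

lemma braidChain_two (n a : ℕ) : braidChain n a 2 = braidGen n a * braidGen n (a + 1) := by
  simp [braidChain, List.range_succ]

lemma Commute.braidChain_right {n a len : ℕ} {x : BraidGroup n}
    (h : ∀ m, a ≤ m → m < a + len → Commute x (braidGen n m)) :
    Commute x (braidChain n a len) :=
  Commute.list_prod_right _ _ <| by
    simp only [List.mem_map, List.mem_range]
    rintro _ ⟨t, ht, rfl⟩
    exact h (a + t) (by omega) (by omega)

lemma Commute.bkl_right {n i j : ℕ} {x : BraidGroup n} (hij : i < j)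
    (h : ∀ m, i ≤ m → m < j → Commute x (braidGen n m)) : Commute x (bkl n i j) := by
  have hchain : Commute x (braidChain n (i + 1) (j - 1 - i)) :=
    Commute.braidChain_right fun m hm hm' => h m (by omega) (by omega)
  rw [bkl_eq_conj_braidChain]
  exact (hchain.inv_right.mul_right (h i le_rfl hij)).mul_right hchain

lemma semiconjBy_braidChain {n a len m : ℕ} (ha : 1 ≤ a) (ham : a ≤ m)
    (hm : m + 2 ≤ a + len) (hn : a + len ≤ n) :
    SemiconjBy (braidChain n a len) (braidGen n m) (braidGen n (m + 1)) := by
  obtain ⟨p, q, rfl, rfl⟩ : ∃ p q, len = p + 2 + q ∧ m = a + p :=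
    ⟨m - a, a + len - m - 2, by omega, by omega⟩
  have hbraid :
      SemiconjBy (braidChain n (a + p) 2) (braidGen n (a + p)) (braidGen n (a + p + 1)) := by
    rw [SemiconjBy, braidChain_two, ← mul_assoc, braidGen_braid (by omega) (by omega), mul_assoc]
  have hlow : Commute (braidChain n a p) (braidGen n (a + p + 1)) :=
    (Commute.braidChain_right fun _ _ _ => (braidGen_commute (by omega) (by omega)).symm).symm
  have hhigh : Commute (braidChain n (a + p + 2) q) (braidGen n (a + p)) :=
    (Commute.braidChain_right fun _ _ _ => braidGen_commute (by omega) (by omega)).symm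
  -- the chain is `low * (σ_m σ_{m+1}) * high`, and only the middle factor moves `σ_m`
  rw [braidChain_add, braidChain_add]
  exact (SemiconjBy.mul_left hlow hbraid).mul_left hhigh

lemma commute_braidGen_bkl {n i j m : ℕ} (hi : 1 ≤ i) (him : i < m) (hmj : m + 2 ≤ j)
    (hj : j ≤ n) : Commute (braidGen n m) (bkl n i j) := by
  rw [bkl_eq_conj_braidChain]
  exact Commute.inv_mul_mul_of_semiconjBy
    (semiconjBy_braidChain (by omega) him (by omega) (by omega))
    (braidGen_commute hi (by omega)).symm

/-- The Birman–Ko–Lee generators β_{i,j} and β_{k,l} of the braid group B_n commute whenever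
1 ≤ i < j < k < l ≤ n (disjoint indices) or 1 ≤ i < k < l < j ≤ n (nested indices). -/
theorem bkl_commute (n i j k l : ℕ) (hi : 1 ≤ i)
    (h : (i < j ∧ j < k ∧ k < l ∧ l ≤ n) ∨ (i < k ∧ k < l ∧ l < j ∧ j ≤ n)) :
    Commute (bkl n i j) (bkl n k l) := by
  rcases h with ⟨hij, hjk, hkl, -⟩ | ⟨hik, hkl, hlj, hjn⟩
  · refine Commute.bkl_right hkl fun m hkm hml =>
      (Commute.bkl_right hij fun m' him' hm'j => ?_).symm
    exact (braidGen_commute (by omega) (by omega)).symm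
  · exact Commute.bkl_right hkl fun m hkm hml =>
      (commute_braidGen_bkl hi (by omega) (by omega) hjn).symm
end

section
/- Let g ≥ 3 and let w := v_4 (v_5^{-1} v_6^{-1} ⋯ v_{2g−1}^{-1}) v_{2g} (v_{2g−1}^{-1} ⋯ v_6^{-1} v_5^{-1}) v_4 ∈ A(C̄_{2g+1}). Then there exists an injective group homomorphism A(C̄_5) → A(C̄_{2g+1}) sending v_1 ↦ v_1, v_2 ↦ v_2, v_3 ↦ v_3, v_4 ↦ w, and v_5 ↦ v_{2g+1}. -/
/-- The right-angled Artin group of a simple graph. -/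
def raagRels {V : Type*} (G : SimpleGraph V) : Set (FreeGroup V) :=
  {r | ∃ u u' : V, G.Adj u u' ∧
    r = FreeGroup.of u * FreeGroup.of u' * (FreeGroup.of u)⁻¹ * (FreeGroup.of u')⁻¹}

abbrev RAAG {V : Type*} (G : SimpleGraph V) : Type _ := PresentedGroup (raagRels G)

/-- The complement of the m-cycle: i, j adjacent iff distinct and not cyclically adjacent
(vertices are 0-based, so vertex v_k of the paper corresponds to index k-1). -/
def cycCompl (m : ℕ) : SimpleGraph (Fin m) where
  Adj i j := i ≠ j ∧ ((i : ℕ) + 1) % m ≠ (j : ℕ) ∧ ((j : ℕ) + 1) % m ≠ (i : ℕ)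
  symm := by constructor; intro i j h; exact ⟨h.1.symm, h.2.2, h.2.1⟩
  loopless := by constructor; intro i h; exact h.1 rfl

/-- The generator v_k (1-based) of the RAAG on the complement of the m-cycle. -/
def vgen (m k : ℕ) : RAAG (cycCompl m) :=
  if h : k - 1 < m then PresentedGroup.of (⟨k - 1, h⟩ : Fin m) else 1

/-!
Write `v_k` for `vgen m k` and put `u_{2g} = v_{2g}`, `u_j = v_j⁻¹ u_{j+1} v_j⁻¹`, so that
`w = v_4 u_5 v_4`; the map `φ` is well defined since `v_1, v_2` commute with `v_4` and with `u_5`.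

Split both groups as HNN extensions along `v_4`; in `A(C̄_5)` the base is `⟨v_1, v_2, v_3, v_5⟩`
and the link `⟨v_1, v_2⟩`. A retraction `β` with `β ∘ φ = id` on that base shows that `φ` is
injective there and that `φ q ∈ ⟨v_1, v_2⟩` forces `q ∈ ⟨v_1, v_2⟩`. The image of a reduced word
of `A(C̄_5)` becomes a reduced word along `v_4` once every run `v_4^ε q v_4^{-ε}` with `φ q` in the
link of `v_4` is merged into a chain word `u_5^ε y₁ u_5^{-ε} y₂ ⋯ c` with
`yᵢ ∈ ⟨v_1, v_2, v_{2g+1}⟩ \ ⟨v_1, v_2⟩`, so Britton's lemma applies as soon as chain words avoid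
the link of `v_4`. That holds at every level `j`: since the letters commute with `v_j`, a chain
word in `u_j` is `v_j^{-ε} · (chain word in u_{j+1}) · v_j^{-ε'}`, and Britton's lemma at `v_j`,
by downward induction from `u_{2g} = v_{2g}`, shows that it is not supported off `v_j`.
-/

section HNNWords

variable {H : Type*} [Group H]

def hnnProd (s : H) (l : List (ℤˣ × H)) : H :=
  (l.map fun p => s ^ (p.1 : ℤ) * p.2).prod

@[simp]
theorem hnnProd_nil (s : H) : hnnProd s [] = 1 := rfl

@[simp]
theorem hnnProd_cons (s : H) (p : ℤˣ × H) (l : List (ℤˣ × H)) :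
    hnnProd s (p :: l) = s ^ (p.1 : ℤ) * p.2 * hnnProd s l := rfl

theorem hnnProd_mem {K : Subgroup H} {s : H} {l : List (ℤˣ × H)} (hs : s ∈ K)
    (hl : ∀ p ∈ l, p.2 ∈ K) : hnnProd s l ∈ K := by
  induction l with
  | nil => exact K.one_mem
  | cons p l ih =>
    simp only [List.mem_cons, forall_eq_or_imp] at hl
    exact K.mul_mem (K.mul_mem (K.zpow_mem hs _) hl.1) (ih hl.2)

theorem zpow_units_mul_mul (a b : H) (δ : ℤˣ) :
    (a * b * a) ^ (δ : ℤ) = a ^ (δ : ℤ) * b ^ (δ : ℤ) * a ^ (δ : ℤ) := by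
  rcases Int.units_eq_one_or δ with rfl | rfl <;> simp [mul_assoc]

end HNNWords

section AltLetters

variable {α : Type*}

def altLetters (δ : ℤˣ) : List α → α → List (ℤˣ × α)
  | [], c => [(δ, c)]
  | y :: ys, c => (δ, y) :: altLetters (-δ) ys c

theorem mem_altLetters {δ : ℤˣ} {ys : List α} {c : α} {p : ℤˣ × α}
    (hp : p ∈ altLetters δ ys c) : p.2 ∈ ys ∨ p.2 = c := by
  induction ys generalizing δ with
  | nil =>
    simp only [altLetters, List.mem_singleton] at hp
    simp [hp]
  | cons y ys ih =>
    simp only [altLetters, List.mem_cons] at hp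
    rcases hp with rfl | hp
    · simp
    · rcases ih hp with h | h <;> simp [h]

theorem exists_hnnProd_altLetters_eq {H : Type*} [Group H] {a : H} (s : H) {ys : List H} {c : H}
    (hys : ∀ y ∈ ys, Commute a y) (hc : Commute a c) (δ : ℤˣ) :
    ∃ δ' : ℤˣ, hnnProd (a⁻¹ * s * a⁻¹) (altLetters δ ys c) =
      a ^ (-(δ : ℤ)) * hnnProd s (altLetters δ ys c) * a ^ (-(δ' : ℤ)) := by
  induction ys generalizing δ with
  | nil =>
    refine ⟨δ, ?_⟩
    have hc' : a ^ (-(δ : ℤ)) * c = c * a ^ (-(δ : ℤ)) := (hc.zpow_left _).eq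
    simp only [altLetters, hnnProd_cons, hnnProd_nil, zpow_units_mul_mul, inv_zpow', mul_one]
    rw [mul_assoc _ (a ^ (-(δ : ℤ))) c, hc']
    group
  | cons y ys ih =>
    obtain ⟨δ', h⟩ := ih (fun z hz => hys z (List.mem_cons_of_mem _ hz)) (-δ)
    refine ⟨δ', ?_⟩
    have hy : a ^ (-(δ : ℤ)) * y * a ^ (δ : ℤ) = y := by
      rw [((hys y (by simp)).zpow_left _).eq]
      group
    simp only [altLetters, hnnProd_cons, h, zpow_units_mul_mul, inv_zpow', Units.val_neg, neg_neg]
    calc a ^ (-(δ : ℤ)) * s ^ (δ : ℤ) * a ^ (-(δ : ℤ)) * y *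
          (a ^ (δ : ℤ) * hnnProd s (altLetters (-δ) ys c) * a ^ (-(δ' : ℤ)))
        = a ^ (-(δ : ℤ)) * s ^ (δ : ℤ) * (a ^ (-(δ : ℤ)) * y * a ^ (δ : ℤ)) *
          hnnProd s (altLetters (-δ) ys c) * a ^ (-(δ' : ℤ)) := by group
      _ = _ := by rw [hy]; group

end AltLetters

namespace RAAG

variable {V : Type*} {Γ : SimpleGraph V} {H : Type*} [Group H]

def of (v : V) : RAAG Γ := PresentedGroup.of v

theorem commute_of_adj {u v : V} (h : Γ.Adj u v) : Commute (of u : RAAG Γ) (of v) := by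
  have hrel : (PresentedGroup.mk (raagRels Γ))
      (FreeGroup.of u * FreeGroup.of v * (FreeGroup.of u)⁻¹ * (FreeGroup.of v)⁻¹) = 1 :=
    PresentedGroup.one_of_mem ⟨u, v, h, rfl⟩
  simp only [map_mul, map_inv] at hrel
  exact mul_inv_eq_iff_eq_mul.1 (mul_inv_eq_one.1 hrel)

def lift (f : V → H) (hf : ∀ u v, Γ.Adj u v → Commute (f u) (f v)) : RAAG Γ →* H :=
  PresentedGroup.toGroup (f := f) <| by
    rintro _ ⟨u, v, h, rfl⟩
    simp [(hf u v h).eq]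

@[simp]
theorem lift_of (f : V → H) (hf : ∀ u v, Γ.Adj u v → Commute (f u) (f v)) (v : V) :
    lift f hf (of v) = f v :=
  PresentedGroup.toGroup.of _

theorem hom_ext {f f' : RAAG Γ →* H} (h : ∀ v, f (of v) = f' (of v)) : f = f' :=
  PresentedGroup.ext h

theorem closure_range_of : Subgroup.closure (Set.range (of : V → RAAG Γ)) = ⊤ :=
  PresentedGroup.closure_range_of _

open Classical in
noncomputable def proj (S : Set V) : RAAG Γ →* RAAG Γ :=
  lift (fun v => if v ∈ S then of v else 1) fun u v h => by
    split_ifs <;> simp [commute_of_adj h]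

@[simp]
theorem proj_of (S : Set V) (v : V) [Decidable (v ∈ S)] :
    proj S (of v : RAAG Γ) = if v ∈ S then of v else 1 := by
  simp only [proj, lift_of]; congr

theorem proj_proj (S T : Set V) (x : RAAG Γ) : proj T (proj S x) = proj (S ∩ T) x := by
  classical
  rw [← MonoidHom.comp_apply]
  congr 1
  refine hom_ext fun v => ?_
  by_cases hS : v ∈ S <;> by_cases hT : v ∈ T <;> simp [hS, hT]

def special (S : Set V) : Subgroup (RAAG Γ) := Subgroup.closure (of '' S)

theorem of_mem_special {S : Set V} {v : V} (h : v ∈ S) : (of v : RAAG Γ) ∈ special S :=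
  Subgroup.subset_closure ⟨v, h, rfl⟩

theorem special_mono {S T : Set V} (h : S ⊆ T) : (special S : Subgroup (RAAG Γ)) ≤ special T :=
  Subgroup.closure_mono (Set.image_mono h)

theorem special_le {S : Set V} {K : Subgroup (RAAG Γ)} (h : ∀ v ∈ S, of v ∈ K) :
    special S ≤ K := by
  rw [special, Subgroup.closure_le]
  rintro _ ⟨v, hv, rfl⟩
  exact h v hv

theorem map_mem_of_mem_special {S : Set V} {f : RAAG Γ →* H} {K : Subgroup H}
    (h : ∀ v ∈ S, f (of v) ∈ K) {x : RAAG Γ} (hx : x ∈ special S) : f x ∈ K :=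
  special_le (K := K.comap f) h hx

theorem proj_mem_special (S : Set V) (x : RAAG Γ) : proj S x ∈ special S := by
  classical
  suffices (⊤ : Subgroup (RAAG Γ)) ≤ (special S).comap (proj S) from this (Subgroup.mem_top x)
  rw [← closure_range_of, Subgroup.closure_le]
  rintro _ ⟨v, rfl⟩
  by_cases hv : v ∈ S
  · simpa [hv] using of_mem_special hv
  · simp [hv]

theorem proj_eq_self_iff {S : Set V} {x : RAAG Γ} : proj S x = x ↔ x ∈ special S := by
  classical
  refine ⟨fun hx => hx ▸ proj_mem_special S x, fun hx => ?_⟩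
  have : special S ≤ MonoidHom.eqLocus (proj S) (MonoidHom.id (RAAG Γ)) :=
    special_le fun v hv => show proj S (of v) = of v by simp [hv]
  exact this hx

theorem mem_special_inter {S T : Set V} {x : RAAG Γ} (hS : x ∈ special S) (hT : x ∈ special T) :
    x ∈ special (S ∩ T) := by
  rw [← proj_eq_self_iff] at *
  rw [← proj_proj, hS, hT]

theorem commute_of_mem_special {S : Set V} {z x : RAAG Γ} (h : ∀ v ∈ S, Commute z (of v))
    (hx : x ∈ special S) : Commute z x := by
  have : special S ≤ Subgroup.centralizer {z} :=
    special_le fun v hv => Subgroup.mem_centralizer_singleton_iff.2 (h v hv).eq.symm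
  exact (Subgroup.mem_centralizer_singleton_iff.1 (this hx)).symm

variable (Γ) in
def base (t : V) : Subgroup (RAAG Γ) := special {t}ᶜ

variable (Γ) in
def link (t : V) : Subgroup (RAAG Γ) := special (Γ.neighborSet t)

theorem link_le_base_of_not_adj {t s : V} (h : ¬ Γ.Adj t s) : link Γ t ≤ base Γ s :=
  special_mono fun _ hv hvs => h ((Set.mem_singleton_iff.1 hvs) ▸ hv)

theorem commute_of_mem_link {t : V} {x : RAAG Γ} (hx : x ∈ link Γ t) : Commute (of t) x :=
  commute_of_mem_special (fun _ hv => commute_of_adj hv) hx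

def IsReduced (t : V) (l : List (ℤˣ × RAAG Γ)) : Prop :=
  (∀ p ∈ l, p.2 ∈ base Γ t) ∧ l.IsChain fun p q => p.2 ∈ link Γ t → p.1 = q.1

theorem isReduced_nil (t : V) : IsReduced t ([] : List (ℤˣ × RAAG Γ)) :=
  ⟨by simp, List.isChain_nil⟩

theorem IsReduced.tail {t : V} {p : ℤˣ × RAAG Γ} {l : List (ℤˣ × RAAG Γ)}
    (hl : IsReduced t (p :: l)) : IsReduced t l :=
  ⟨fun q hq => hl.1 q (List.mem_cons_of_mem _ hq), hl.2.tail⟩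

theorem IsReduced.sign_eq_of_mem_link {t : V} {ε : ℤˣ} {a : RAAG Γ} {l : List (ℤˣ × RAAG Γ)}
    (hl : IsReduced t ((ε, a) :: l)) (ha : a ∈ link Γ t) : ∀ p ∈ l.head?, ε = p.1 :=
  fun p hp => (List.isChain_cons.1 hl.2).1 p hp ha

theorem IsReduced.cons {t : V} {ε : ℤˣ} {a : RAAG Γ} {l : List (ℤˣ × RAAG Γ)}
    (hl : IsReduced t l) (ha : a ∈ base Γ t) (hsign : a ∈ link Γ t → ∀ p ∈ l.head?, ε = p.1) :
    IsReduced t ((ε, a) :: l) :=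
  ⟨by simpa [ha] using hl.1, List.isChain_cons.2 ⟨fun p hp ha' => hsign ha' p hp, hl.2⟩⟩

theorem isReduced_altLetters {t : V} {δ : ℤˣ} {ys : List (RAAG Γ)} {c : RAAG Γ}
    (hys : ∀ y ∈ ys, y ∈ base Γ t ∧ y ∉ link Γ t) (hc : c ∈ base Γ t) :
    IsReduced t (altLetters δ ys c) := by
  induction ys generalizing δ with
  | nil => exact (isReduced_nil t).cons hc (by simp)
  | cons y ys ih =>
    have hy := hys y (List.mem_cons_self ..)
    exact (ih fun z hz => hys z (List.mem_cons_of_mem _ hz)).cons hy.1 fun h => absurd h hy.2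

variable (Γ) in
/-- `RAAG Γ` splits as this HNN extension of `base Γ t` along the identity of `link Γ t`, with
stable letter `of t`; `toHNN` and `ofHNN` realise the splitting. -/
abbrev HNN (t : V) : Type _ :=
  HNNExtension (base Γ t) ((link Γ t).subgroupOf (base Γ t)) ((link Γ t).subgroupOf (base Γ t))
    (MulEquiv.refl _)

theorem of_mem_base {t v : V} (h : v ≠ t) : (of v : RAAG Γ) ∈ base Γ t :=
  of_mem_special h

open Classical in
noncomputable def toHNN (t : V) : RAAG Γ →* HNN Γ t :=
  lift (fun v => if h : v = t then HNNExtension.t else HNNExtension.of ⟨of v, of_mem_base h⟩)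
    fun u v huv => by
      have hlink {u v : V} (huv : Γ.Adj u v) (hu : u = t) (hv : v ≠ t) :
          Commute (HNNExtension.t : HNN Γ t) (HNNExtension.of ⟨of v, of_mem_base hv⟩) :=
        HNNExtension.t_mul_of (⟨⟨of v, of_mem_base hv⟩,
          Subgroup.mem_subgroupOf.2 (of_mem_special (hu ▸ huv))⟩ : (link Γ t).subgroupOf _)
      by_cases hu : u = t <;> by_cases hv : v = t
      · simp [hu, hv]
      · simpa [hu, hv] using hlink huv hu hv
      · simpa [hu, hv] using (hlink huv.symm hv hu).symm
      · simp only [hu, hv, dite_false]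
        exact (Commute.map (Subtype.ext (commute_of_adj huv).eq :
          Commute (⟨of u, of_mem_base hu⟩ : base Γ t) ⟨of v, of_mem_base hv⟩) HNNExtension.of)

theorem toHNN_of_mem_base {t : V} {a : RAAG Γ} (ha : a ∈ base Γ t) :
    toHNN t a = HNNExtension.of ⟨a, ha⟩ := by
  induction ha using Subgroup.closure_induction with
  | mem x hx =>
    obtain ⟨v, hv, rfl⟩ := hx
    simp [toHNN, Set.mem_compl_singleton_iff.1 hv]
  | one => exact (map_one _).trans (map_one _).symm
  | mul x y hx hy ihx ihy =>
    rw [map_mul, ihx, ihy, ← map_mul]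
    rfl
  | inv x hx ih =>
    rw [map_inv, ih, ← map_inv]
    rfl

noncomputable def ofHNN (t : V) : HNN Γ t →* RAAG Γ :=
  HNNExtension.lift (base Γ t).subtype (of t) fun a =>
    (commute_of_mem_link (Subgroup.mem_subgroupOf.1 a.2)).eq

@[simp]
theorem ofHNN_t (t : V) : ofHNN t (HNNExtension.t : HNN Γ t) = of t :=
  HNNExtension.lift_t _ _ _

@[simp]
theorem ofHNN_of {t : V} (a : base Γ t) : ofHNN t (HNNExtension.of a) = a :=
  HNNExtension.lift_of _ _ _ _

theorem ofHNN_toHNN (t : V) (x : RAAG Γ) : ofHNN t (toHNN t x) = x := by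
  classical
  suffices (ofHNN t).comp (toHNN t) = MonoidHom.id _ from DFunLike.congr_fun this x
  refine hom_ext fun v => ?_
  by_cases hv : v = t
  · subst hv
    simp [toHNN]
  · simp [toHNN, hv]

open HNNExtension HNNExtension.NormalWord

theorem mem_toSubgroup_iff {t : V} {u : ℤˣ} {a : base Γ t} :
    a ∈ toSubgroup ((link Γ t).subgroupOf (base Γ t)) ((link Γ t).subgroupOf (base Γ t)) u ↔
      (a : RAAG Γ) ∈ link Γ t := by
  rw [← Subgroup.mem_subgroupOf]
  unfold toSubgroup
  split_ifs <;> rfl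

theorem toHNN_hnnProd {t : V} (l : List (ℤˣ × RAAG Γ)) (hl : ∀ p ∈ l, p.2 ∈ base Γ t) :
    toHNN t (hnnProd (of t) l) =
      ((l.pmap (fun p hp => (p.1, (⟨p.2, hp⟩ : base Γ t))) hl).map
        fun x => HNNExtension.t ^ (x.1 : ℤ) * HNNExtension.of x.2).prod := by
  induction l with
  | nil => simp
  | cons p l ih =>
    simp only [hnnProd_cons, map_mul, map_zpow, List.pmap_cons, List.map_cons, List.prod_cons,
      ih (fun q hq => hl q (List.mem_cons_of_mem _ hq)), toHNN_of_mem_base (hl p (by simp))]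
    congr 2
    simp [toHNN]

/-- **Britton's lemma** -/
theorem hnnProd_not_mem_base {t : V} {l : List (ℤˣ × RAAG Γ)} (hl : IsReduced t l)
    (hne : l ≠ []) : hnnProd (of t) l ∉ base Γ t := by
  intro hmem
  let w : ReducedWord (base Γ t) ((link Γ t).subgroupOf (base Γ t))
      ((link Γ t).subgroupOf (base Γ t)) :=
    { head := 1
      toList := l.pmap (fun p hp => (p.1, ⟨p.2, hp⟩)) hl.1
      chain := List.isChain_pmap_of_isChain
        (fun _ _ _ _ h ha => h (mem_toSubgroup_iff.1 ha)) hl.2 hl.1 }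
  have hw : w.prod (MulEquiv.refl _) ∈ (HNNExtension.of.range : Subgroup (HNN Γ t)) :=
    ⟨⟨_, hmem⟩, by simp [w, ReducedWord.prod, ← toHNN_hnnProd, toHNN_of_mem_base hmem]⟩
  have := ReducedWord.toList_eq_nil_of_mem_of_range _ w hw
  simp [w] at this
  exact hne this

theorem exists_reduced_form (t : V) (x : RAAG Γ) :
    ∃ a l, a ∈ base Γ t ∧ IsReduced t l ∧ x = a * hnnProd (of t) l := by
  obtain ⟨d⟩ := TransversalPair.nonempty (base Γ t) ((link Γ t).subgroupOf (base Γ t))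
    ((link Γ t).subgroupOf (base Γ t))
  let w := toHNN t x • (empty : NormalWord d)
  refine ⟨w.head, w.toList.map (Prod.map id Subtype.val), w.head.2, ⟨?_, ?_⟩, ?_⟩
  · simp only [List.mem_map]
    rintro _ ⟨q, -, rfl⟩
    exact q.2.2
  · exact (List.isChain_map _).2 (w.chain.imp fun _ _ h ha => h (mem_toSubgroup_iff.2 ha))
  · have hw : w.prod (MulEquiv.refl _) = toHNN t x := by simp [w]
    conv_lhs => rw [← ofHNN_toHNN t x, ← hw]
    simp [ReducedWord.prod, hnnProd, map_list_prod, List.map_map, Function.comp_def]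

end RAAG

section CycleComplement

open RAAG

variable {m : ℕ}

theorem cycCompl_adj_iff {a b : Fin m} :
    (cycCompl m).Adj a b ↔ a.val ≠ b.val ∧ a.val + 1 ≠ b.val ∧ b.val + 1 ≠ a.val ∧
      ¬(a.val + 1 = m ∧ b.val = 0) ∧ ¬(b.val + 1 = m ∧ a.val = 0) := by
  have hmod : ∀ x < m, (x + 1) % m = if x + 1 = m then 0 else x + 1 := fun x hx => by
    split_ifs with h
    · simp [h]
    · exact Nat.mod_eq_of_lt (by omega)
  change a ≠ b ∧ _ ∧ _ ↔ _
  rw [Ne, Fin.ext_iff, hmod _ a.isLt, hmod _ b.isLt]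
  split_ifs <;> omega

variable (m) in
def vspan (s : Set ℕ) : Subgroup (RAAG (cycCompl m)) := special {a | a.val + 1 ∈ s}

theorem vspan_mono {s s' : Set ℕ} (h : s ⊆ s') : vspan m s ≤ vspan m s' :=
  special_mono fun _ ha => h ha

/-- The vertex of `vgen m k`: labels are `1`-based, vertices `0`-based. -/
def vtx (m k : ℕ) [NeZero m] : Fin m := Fin.ofNat m (k - 1)

variable [NeZero m]

theorem vtx_val {k : ℕ} (hk : k ≤ m) : (vtx m k).val = k - 1 := by
  simp only [vtx, Fin.val_ofNat]
  exact Nat.mod_eq_of_lt (by have := NeZero.pos m; omega)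

theorem eq_vtx_iff {a : Fin m} {k : ℕ} (hk : 1 ≤ k) (hkm : k ≤ m) :
    a = vtx m k ↔ a.val + 1 = k := by
  rw [Fin.ext_iff, vtx_val hkm]
  omega

theorem vgen_eq_of {k : ℕ} (hk : k ≤ m) : vgen m k = of (vtx m k) := by
  rw [vgen, dif_pos (by have := NeZero.pos m; omega)]
  exact congrArg _ (Fin.ext (vtx_val hk).symm)

theorem of_eq_vgen (a : Fin m) : (of a : RAAG (cycCompl m)) = vgen m (a.val + 1) := by
  rw [vgen_eq_of (by omega)]
  exact congrArg _ (Fin.ext (by rw [vtx_val (by omega)]; rfl))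

theorem lift_vgen {H : Type*} [Group H] (F : ℕ → H)
    (hF : ∀ a b : Fin m, (cycCompl m).Adj a b → Commute (F (a.val + 1)) (F (b.val + 1)))
    {k : ℕ} (hk : 1 ≤ k) (hkm : k ≤ m) :
    lift (fun a : Fin m => F (a.val + 1)) hF (vgen m k) = F k := by
  rw [vgen_eq_of hkm, lift_of, vtx_val hkm, Nat.sub_add_cancel hk]

theorem cycCompl_adj_vtx_iff {i j : ℕ} (hi : 1 ≤ i ∧ i ≤ m) (hj : 1 ≤ j ∧ j ≤ m) :
    (cycCompl m).Adj (vtx m i) (vtx m j) ↔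
      i ≠ j ∧ i + 1 ≠ j ∧ j + 1 ≠ i ∧ ¬(i = m ∧ j = 1) ∧ ¬(j = m ∧ i = 1) := by
  rw [cycCompl_adj_iff, vtx_val hi.2, vtx_val hj.2]
  omega

theorem commute_vgen {i j : ℕ} (h : 1 ≤ i ∧ i ≤ m ∧ 1 ≤ j ∧ j ≤ m ∧
      i ≠ j ∧ i + 1 ≠ j ∧ j + 1 ≠ i ∧ ¬(i = m ∧ j = 1) ∧ ¬(j = m ∧ i = 1)) :
    Commute (vgen m i) (vgen m j) := by
  rw [vgen_eq_of h.2.1, vgen_eq_of h.2.2.2.1]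
  exact commute_of_adj ((cycCompl_adj_vtx_iff ⟨h.1, h.2.1⟩ ⟨h.2.2.1, h.2.2.2.1⟩).2 h.2.2.2.2)

theorem vgen_mem_vspan {s : Set ℕ} {k : ℕ} (hk : k ∈ s) (hk1 : 1 ≤ k) : vgen m k ∈ vspan m s := by
  by_cases hkm : k ≤ m
  · rw [vgen_eq_of hkm]
    exact of_mem_special (show (vtx m k).val + 1 ∈ s by rwa [vtx_val hkm, Nat.sub_add_cancel hk1])
  · rw [vgen, dif_neg (by omega)]
    exact one_mem _

theorem vspan_le_base {s : Set ℕ} {j : ℕ} (hj : j ∉ s) (hj1 : 1 ≤ j) (hjm : j ≤ m) :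
    vspan m s ≤ base (cycCompl m) (vtx m j) :=
  special_mono fun a ha haj => hj <| by
    rw [Set.mem_singleton_iff] at haj
    subst haj
    rwa [Set.mem_ofPred_eq, vtx_val hjm, Nat.sub_add_cancel hj1] at ha

theorem mem_vspan_of_mem_link {s s' : Set ℕ} {j : ℕ}
    (h : ∀ k ∈ s, k ≤ m → (cycCompl m).Adj (vtx m j) (vtx m k) → k ∈ s')
    {x : RAAG (cycCompl m)} (hx : x ∈ vspan m s) (hxl : x ∈ link (cycCompl m) (vtx m j)) :
    x ∈ vspan m s' := by
  refine special_mono (fun a ha => ?_) (mem_special_inter hx hxl)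
  obtain ⟨ha, hadj⟩ := ha
  have hvtx : vtx m (a.val + 1) = a := Fin.ext (by rw [vtx_val (by omega)]; rfl)
  exact h _ ha (by omega) (by rw [hvtx]; exact hadj)

theorem link_le_base_succ {j : ℕ} (hj : 1 ≤ j) (hjm : j + 1 ≤ m) :
    link (cycCompl m) (vtx m j) ≤ base (cycCompl m) (vtx m (j + 1)) :=
  link_le_base_of_not_adj (by rw [cycCompl_adj_vtx_iff (by omega) (by omega)]; omega)

theorem commute_of_mem_vspan {s : Set ℕ} {z x : RAAG (cycCompl m)}
    (h : ∀ k ∈ s, 1 ≤ k → k ≤ m → Commute z (vgen m k)) (hx : x ∈ vspan m s) : Commute z x :=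
  commute_of_mem_special (fun a ha => by rw [of_eq_vgen]; exact h _ ha (by omega) (by omega)) hx

end CycleComplement

namespace C5bar

open RAAG

variable (g : ℕ)

noncomputable def u (j : ℕ) : RAAG (cycCompl (2 * g + 1)) :=
  if j < 2 * g then (vgen (2 * g + 1) j)⁻¹ * u (j + 1) * (vgen (2 * g + 1) j)⁻¹
  else vgen (2 * g + 1) (2 * g)
termination_by 2 * g - j

theorem u_of_lt {j : ℕ} (hj : j < 2 * g) :
    u g j = (vgen (2 * g + 1) j)⁻¹ * u g (j + 1) * (vgen (2 * g + 1) j)⁻¹ := by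
  rw [u, if_pos hj]

theorem u_two_mul : u g (2 * g) = vgen (2 * g + 1) (2 * g) := by
  rw [u, if_neg (lt_irrefl _)]

theorem u_mem_vspan {j : ℕ} (hj : 1 ≤ j) (hjg : j ≤ 2 * g) :
    u g j ∈ vspan (2 * g + 1) (Set.Icc j (2 * g)) := by
  induction hjg using Nat.decreasingInduction with
  | self => exact u_two_mul g ▸ vgen_mem_vspan ⟨le_rfl, le_rfl⟩ hj
  | of_succ j hjg ih =>
    have hv : vgen (2 * g + 1) j ∈ vspan (2 * g + 1) (Set.Icc j (2 * g)) :=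
      vgen_mem_vspan ⟨le_rfl, hjg.le⟩ hj
    have hu := vspan_mono (Set.Icc_subset_Icc_left (Nat.le_succ j)) (ih (by omega))
    rw [u_of_lt g hjg]
    exact mul_mem (mul_mem (inv_mem hv) hu) (inv_mem hv)

theorem u_eq_prod {j : ℕ} (hjg : j ≤ 2 * g) :
    u g j = ((List.range (2 * g - j)).map fun t => (vgen (2 * g + 1) (j + t))⁻¹).prod *
      vgen (2 * g + 1) (2 * g) *
      ((List.range (2 * g - j)).map fun t => (vgen (2 * g + 1) (2 * g - 1 - t))⁻¹).prod := by
  induction hjg using Nat.decreasingInduction with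
  | self => simp [u_two_mul]
  | of_succ j hjg ih =>
    obtain ⟨n, hn⟩ : ∃ n, 2 * g - j = n + 1 := ⟨2 * g - (j + 1), by omega⟩
    rw [u_of_lt g hjg, ih, hn, List.prod_range_succ', List.prod_range_succ,
      show 2 * g - (j + 1) = n by omega, show 2 * g - 1 - n = j by omega]
    simp only [add_zero, Nat.succ_eq_add_one, add_assoc, add_comm 1, mul_assoc]

noncomputable def w : RAAG (cycCompl (2 * g + 1)) :=
  vgen (2 * g + 1) 4 * u g 5 * vgen (2 * g + 1) 4

variable {g}

theorem commute_vgen_w (hg : 3 ≤ g) {k : ℕ} (hk : k = 1 ∨ k = 2) :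
    Commute (vgen (2 * g + 1) k) (w g) := by
  have h4 : Commute (vgen (2 * g + 1) k) (vgen (2 * g + 1) 4) := commute_vgen (by omega)
  have hu : Commute (vgen (2 * g + 1) k) (u g 5) :=
    commute_of_mem_vspan (fun i hi _ _ => commute_vgen (by simp at hi; omega))
      (u_mem_vspan g (by omega) (by omega))
  exact (h4.mul_right hu).mul_right h4

variable (g)

noncomputable def phiGen (k : ℕ) : RAAG (cycCompl (2 * g + 1)) :=
  if k = 4 then w g else if k = 5 then vgen (2 * g + 1) (2 * g + 1) else vgen (2 * g + 1) k

noncomputable def phi (hg : 3 ≤ g) : RAAG (cycCompl 5) →* RAAG (cycCompl (2 * g + 1)) :=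
  lift (fun a => phiGen g (a.val + 1)) fun a b hab => by
    rw [cycCompl_adj_iff] at hab
    have := a.isLt
    have := b.isLt
    unfold phiGen
    split_ifs <;> first
      | exact commute_vgen (by omega)
      | exact commute_vgen_w hg (by omega)
      | exact (commute_vgen_w hg (by omega)).symm
      | (exfalso; omega)

noncomputable def betaGen (k : ℕ) : RAAG (cycCompl 5) :=
  if k ≤ 3 then vgen 5 k else if k = 2 * g + 1 then vgen 5 5 else 1

noncomputable def beta : RAAG (cycCompl (2 * g + 1)) →* RAAG (cycCompl 5) :=
  lift (fun a => betaGen g (a.val + 1)) fun a b hab => by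
    rw [cycCompl_adj_iff] at hab
    have := a.isLt
    have := b.isLt
    unfold betaGen
    split_ifs <;> first
      | exact Commute.one_left _
      | exact Commute.one_right _
      | exact commute_vgen (by omega)

variable {g}

theorem phi_vgen (hg : 3 ≤ g) {k : ℕ} (hk : 1 ≤ k) (hk5 : k ≤ 5) :
    phi g hg (vgen 5 k) = phiGen g k :=
  lift_vgen _ _ hk hk5

theorem beta_vgen {k : ℕ} (hk : 1 ≤ k) (hkg : k ≤ 2 * g + 1) :
    beta g (vgen (2 * g + 1) k) = betaGen g k :=
  lift_vgen _ _ hk hkg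

theorem beta_phi_of_mem_base (hg : 3 ≤ g) {q : RAAG (cycCompl 5)}
    (hq : q ∈ base (cycCompl 5) (vtx 5 4)) : beta g (phi g hg q) = q := by
  have : base (cycCompl 5) (vtx 5 4) ≤
      MonoidHom.eqLocus ((beta g).comp (phi g hg)) (MonoidHom.id _) := by
    refine special_le fun a ha => ?_
    have ha4 : a.val + 1 ≠ 4 := fun h => ha ((eq_vtx_iff (by norm_num) (by norm_num)).2 h)
    have := a.isLt
    show beta g (phi g hg (of a)) = of a
    rw [of_eq_vgen, phi_vgen hg (by omega) (by omega), phiGen, if_neg (by omega)]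
    split_ifs with h5
    · rw [beta_vgen (by omega) le_rfl, betaGen, if_neg (by omega), if_pos rfl, h5]
    · rw [beta_vgen (by omega) (by omega), betaGen, if_pos (by omega)]
  exact this hq

theorem phi_mem_vspan (hg : 3 ≤ g) {q : RAAG (cycCompl 5)}
    (hq : q ∈ base (cycCompl 5) (vtx 5 4)) :
    phi g hg q ∈ vspan (2 * g + 1) {1, 2, 3, 2 * g + 1} := by
  refine map_mem_of_mem_special (f := phi g hg) (fun a ha => ?_) hq
  have ha4 : a.val + 1 ≠ 4 := fun h => ha ((eq_vtx_iff (by norm_num) (by norm_num)).2 h)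
  have := a.isLt
  rw [of_eq_vgen, phi_vgen hg (by omega) (by omega), phiGen, if_neg (by omega)]
  split_ifs with h5
  · exact vgen_mem_vspan (by simp) (by omega)
  · exact vgen_mem_vspan (by simp; omega) (by omega)

theorem phi_mem_base (hg : 3 ≤ g) {q : RAAG (cycCompl 5)}
    (hq : q ∈ base (cycCompl 5) (vtx 5 4)) :
    phi g hg q ∈ base (cycCompl (2 * g + 1)) (vtx (2 * g + 1) 4) :=
  vspan_le_base (by simp; omega) (by omega) (by omega) (phi_mem_vspan hg hq)

theorem mem_link_of_phi_mem_vspan (hg : 3 ≤ g) {q : RAAG (cycCompl 5)}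
    (hq : q ∈ base (cycCompl 5) (vtx 5 4)) (h : phi g hg q ∈ vspan (2 * g + 1) {1, 2}) :
    q ∈ link (cycCompl 5) (vtx 5 4) := by
  rw [← beta_phi_of_mem_base hg hq]
  refine map_mem_of_mem_special (f := beta g) (fun a ha => ?_) h
  have ha' : a.val + 1 = 1 ∨ a.val + 1 = 2 := ha
  have := a.isLt
  rw [of_eq_vgen, beta_vgen (by omega) (by omega), betaGen, if_pos (by omega),
    vgen_eq_of (by omega)]
  exact of_mem_special ((cycCompl_adj_vtx_iff (by norm_num) (by omega)).2 (by omega))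

variable (g) in
def IsChainLetter (y : RAAG (cycCompl (2 * g + 1))) : Prop :=
  y ∈ vspan (2 * g + 1) {1, 2, 2 * g + 1} ∧ y ∉ vspan (2 * g + 1) {1, 2}

theorem hnnProd_u_mem_vspan {j : ℕ} (hj : 1 ≤ j) (hjg : j ≤ 2 * g) (δ : ℤˣ)
    {ys : List (RAAG (cycCompl (2 * g + 1)))} {c : RAAG (cycCompl (2 * g + 1))}
    (hys : ∀ y ∈ ys, IsChainLetter g y) (hc : c ∈ vspan (2 * g + 1) {1, 2, 3, 2 * g + 1}) :
    hnnProd (u g j) (altLetters δ ys c) ∈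
      vspan (2 * g + 1) ({1, 2, 3, 2 * g + 1} ∪ Set.Icc j (2 * g)) := by
  refine hnnProd_mem (vspan_mono Set.subset_union_right (u_mem_vspan g hj hjg)) fun p hp => ?_
  rcases mem_altLetters hp with hy | rfl
  · exact vspan_mono (fun k hk => by simp at hk ⊢; omega) (hys _ hy).1
  · exact vspan_mono Set.subset_union_left hc

theorem hnnProd_u_not_mem_base (hg : 3 ≤ g) {j : ℕ} (hj : 5 ≤ j) (hjg : j ≤ 2 * g) (δ : ℤˣ)
    {ys : List (RAAG (cycCompl (2 * g + 1)))} {c : RAAG (cycCompl (2 * g + 1))}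
    (hys : ∀ y ∈ ys, IsChainLetter g y) (hc : c ∈ vspan (2 * g + 1) {1, 2, 3, 2 * g + 1}) :
    hnnProd (u g j) (altLetters δ ys c) ∉ base (cycCompl (2 * g + 1)) (vtx (2 * g + 1) j) := by
  induction hjg using Nat.decreasingInduction with
  | self =>
    rw [u_two_mul, vgen_eq_of (by omega)]
    refine hnnProd_not_mem_base (isReduced_altLetters (fun y hy => ⟨?_, fun hl => ?_⟩) ?_)
      (by cases ys <;> simp [altLetters])
    · exact vspan_le_base (by simp; omega) (by omega) (by omega) (hys y hy).1
    · refine (hys y hy).2 (mem_vspan_of_mem_link (fun k hk _ hadj => ?_) (hys y hy).1 hl)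
      rw [cycCompl_adj_vtx_iff (by omega) (by simp at hk; omega)] at hadj
      simp at hk ⊢
      omega
    · exact vspan_le_base (by simp; omega) (by omega) (by omega) hc
  | of_succ j hjg ih =>
    have hcomm : ∀ x ∈ vspan (2 * g + 1) {1, 2, 3, 2 * g + 1}, Commute (vgen (2 * g + 1) j) x :=
      fun x => commute_of_mem_vspan fun k hk _ _ => commute_vgen (by simp at hk; omega)
    obtain ⟨δ', hδ'⟩ := exists_hnnProd_altLetters_eq (u g (j + 1))
      (fun y hy => hcomm y (vspan_mono (by intro k; simp; omega) (hys y hy).1)) (hcomm c hc) δ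
    set X := hnnProd (u g (j + 1)) (altLetters δ ys c)
    have hX : X ∈ base (cycCompl (2 * g + 1)) (vtx (2 * g + 1) j) :=
      vspan_le_base (by simp; omega) (by omega) (by omega)
        (hnnProd_u_mem_vspan (by omega) hjg δ hys hc)
    have hXl : X ∉ link (cycCompl (2 * g + 1)) (vtx (2 * g + 1) j) := fun h =>
      ih (by omega) (link_le_base_succ (by omega) (by omega) h)
    rw [u_of_lt g hjg, hδ', vgen_eq_of (by omega),
      show of (vtx (2 * g + 1) j) ^ (-(δ : ℤ)) * X * of (vtx (2 * g + 1) j) ^ (-(δ' : ℤ)) =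
        hnnProd (of (vtx (2 * g + 1) j)) [(-δ, X), (-δ', 1)] by simp [mul_assoc]]
    exact hnnProd_not_mem_base (((isReduced_nil _).cons (one_mem _) (by simp)).cons hX
      fun h => absurd h hXl) (List.cons_ne_nil _ _)

variable (g) in
def IsChainWord (ε : ℤˣ) (a : RAAG (cycCompl (2 * g + 1))) : Prop :=
  ∃ ys c, (∀ y ∈ ys, IsChainLetter g y) ∧ c ∈ vspan (2 * g + 1) {1, 2, 3, 2 * g + 1} ∧
    a = hnnProd (u g 5) (altLetters ε ys c)

theorem isChainWord_zpow (ε : ℤˣ) : IsChainWord g ε (u g 5 ^ (ε : ℤ)) :=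
  ⟨[], 1, by simp, one_mem _, by simp [altLetters]⟩

theorem IsChainWord.cons {ε : ℤˣ} {a y : RAAG (cycCompl (2 * g + 1))}
    (ha : IsChainWord g (-ε) a) (hy : IsChainLetter g y) :
    IsChainWord g ε (u g 5 ^ (ε : ℤ) * y * a) := by
  obtain ⟨ys, c, hys, hc, rfl⟩ := ha
  exact ⟨y :: ys, c, by simpa [hy] using hys, hc, by simp [altLetters]⟩

theorem IsChainWord.mem_base (hg : 3 ≤ g) {ε : ℤˣ} {a : RAAG (cycCompl (2 * g + 1))}
    (ha : IsChainWord g ε a) : a ∈ base (cycCompl (2 * g + 1)) (vtx (2 * g + 1) 4) := by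
  obtain ⟨ys, c, hys, hc, rfl⟩ := ha
  exact vspan_le_base (by simp; omega) (by omega) (by omega)
    (hnnProd_u_mem_vspan (by omega) (by omega) ε hys hc)

theorem IsChainWord.not_mem_link (hg : 3 ≤ g) {ε : ℤˣ} {a : RAAG (cycCompl (2 * g + 1))}
    (ha : IsChainWord g ε a) : a ∉ link (cycCompl (2 * g + 1)) (vtx (2 * g + 1) 4) := by
  obtain ⟨ys, c, hys, hc, rfl⟩ := ha
  exact fun h => hnnProd_u_not_mem_base hg le_rfl (by omega) ε hys hc
    (link_le_base_succ (by omega) (by omega) h)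

theorem w_zpow (ε : ℤˣ) :
    w g ^ (ε : ℤ) = vgen (2 * g + 1) 4 ^ (ε : ℤ) * u g 5 ^ (ε : ℤ) * vgen (2 * g + 1) 4 ^ (ε : ℤ) :=
  zpow_units_mul_mul _ _ _

theorem phi_hnnProd_cons (hg : 3 ≤ g) (ε : ℤˣ) (q : RAAG (cycCompl 5))
    (l : List (ℤˣ × RAAG (cycCompl 5))) :
    phi g hg (hnnProd (vgen 5 4) ((ε, q) :: l)) =
      w g ^ (ε : ℤ) * phi g hg q * phi g hg (hnnProd (vgen 5 4) l) := by
  rw [hnnProd_cons, map_mul, map_mul, map_zpow, phi_vgen hg (by norm_num) (by norm_num), phiGen,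
    if_pos rfl]

theorem isChainLetter_phi (hg : 3 ≤ g) {q : RAAG (cycCompl 5)}
    (hq : q ∈ base (cycCompl 5) (vtx 5 4))
    (hqlink : phi g hg q ∈ link (cycCompl (2 * g + 1)) (vtx (2 * g + 1) 4))
    (hqC : q ∉ link (cycCompl 5) (vtx 5 4)) : IsChainLetter g (phi g hg q) := by
  refine ⟨mem_vspan_of_mem_link (fun k hk _ hadj => ?_) (phi_mem_vspan hg hq) hqlink,
    fun h => hqC (mem_link_of_phi_mem_vspan hg hq h)⟩
  rw [cycCompl_adj_vtx_iff (by omega) (by simp at hk; omega)] at hadj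
  simp at hk ⊢
  omega

theorem hnnProd_zpow_u_cons (ε : ℤˣ) (x : RAAG (cycCompl (2 * g + 1)))
    (L : List (ℤˣ × RAAG (cycCompl (2 * g + 1)))) :
    hnnProd (vgen (2 * g + 1) 4) ((ε, u g 5 ^ (ε : ℤ)) :: (ε, x) :: L) =
      w g ^ (ε : ℤ) * x * hnnProd (vgen (2 * g + 1) 4) L := by
  simp [w_zpow, mul_assoc]

theorem isReduced_zpow_u_cons (hg : 3 ≤ g) {ε : ℤˣ} {q : RAAG (cycCompl 5)}
    (hq : q ∈ base (cycCompl 5) (vtx 5 4)) {L : List (ℤˣ × RAAG (cycCompl (2 * g + 1)))}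
    (hL : IsReduced (vtx (2 * g + 1) 4) L)
    (hsign : phi g hg q ∈ link (cycCompl (2 * g + 1)) (vtx (2 * g + 1) 4) →
      ∀ p ∈ L.head?, ε = p.1) :
    IsReduced (vtx (2 * g + 1) 4) ((ε, u g 5 ^ (ε : ℤ)) :: (ε, phi g hg q) :: L) :=
  (hL.cons (phi_mem_base hg hq) hsign).cons
    ((isChainWord_zpow ε).mem_base hg) fun h => absurd h ((isChainWord_zpow ε).not_mem_link hg)

theorem exists_isReduced_image (hg : 3 ≤ g) (l : List (ℤˣ × RAAG (cycCompl 5))) (ε : ℤˣ)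
    (q : RAAG (cycCompl 5)) (hl : IsReduced (vtx 5 4) ((ε, q) :: l)) :
    ∃ a L, IsChainWord g ε a ∧ IsReduced (vtx (2 * g + 1) 4) ((ε, a) :: L) ∧
      hnnProd (vgen (2 * g + 1) 4) ((ε, a) :: L) = phi g hg (hnnProd (vgen 5 4) ((ε, q) :: l)) := by
  induction l generalizing ε q with
  | nil =>
    refine ⟨_, _, isChainWord_zpow ε,
      isReduced_zpow_u_cons hg (hl.1 _ (List.mem_cons_self ..)) (isReduced_nil _) (by simp), ?_⟩
    rw [hnnProd_zpow_u_cons, phi_hnnProd_cons]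
    simp
  | cons p l ih =>
    obtain ⟨ε₁, q₁⟩ := p
    have hq : q ∈ base (cycCompl 5) (vtx 5 4) := hl.1 _ (List.mem_cons_self ..)
    obtain ⟨a₁, L₁, ha₁, hL₁, hprod₁⟩ := ih ε₁ q₁ hl.tail
    rw [phi_hnnProd_cons, ← hprod₁]
    by_cases hmerge : phi g hg q ∈ link (cycCompl (2 * g + 1)) (vtx (2 * g + 1) 4) ∧ ε₁ = -ε
    · obtain ⟨hqlink, rfl⟩ := hmerge
      have hqC : q ∉ link (cycCompl 5) (vtx 5 4) := fun h =>
        Int.units_ne_iff_eq_neg.2 rfl (hl.sign_eq_of_mem_link h _ rfl).symm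
      have ha := ha₁.cons (isChainLetter_phi hg hq hqlink hqC)
      refine ⟨_, L₁, ha, hL₁.tail.cons (ha.mem_base hg) fun h => absurd h (ha.not_mem_link hg), ?_⟩
      have hcomm : Commute (vgen (2 * g + 1) 4 ^ (ε : ℤ)) (phi g hg q) := by
        rw [vgen_eq_of (by omega)]
        exact (commute_of_mem_link hqlink).zpow_left _
      rw [w_zpow, hnnProd_cons, hnnProd_cons, mul_assoc _ _ (phi g hg q), hcomm.eq]
      simp only [Units.val_neg, mul_assoc, zpow_neg, mul_inv_cancel_left]
    · refine ⟨_, _, isChainWord_zpow ε, isReduced_zpow_u_cons hg hq hL₁ ?_, hnnProd_zpow_u_cons ..⟩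
      rintro hqlink _ ⟨⟩
      by_contra hne
      exact hmerge ⟨hqlink, Int.units_ne_iff_eq_neg.1 (Ne.symm hne)⟩

theorem phi_injective (hg : 3 ≤ g) : Function.Injective (phi g hg) := by
  rw [injective_iff_map_eq_one]
  intro x hx
  obtain ⟨q, l, hq, hl, rfl⟩ := exists_reduced_form (vtx 5 4) x
  rw [← vgen_eq_of (by norm_num)] at hx ⊢
  cases l with
  | nil =>
    rw [hnnProd_nil, mul_one] at hx ⊢
    rw [← beta_phi_of_mem_base hg hq, hx, map_one]
  | cons p l =>
    obtain ⟨a, L, -, hL, hprod⟩ := exists_isReduced_image hg l p.1 p.2 hl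
    rw [map_mul, ← hprod, mul_eq_one_iff_inv_eq] at hx
    have hbase : hnnProd (vgen (2 * g + 1) 4) ((p.1, a) :: L) ∈
        base (cycCompl (2 * g + 1)) (vtx (2 * g + 1) 4) :=
      hx ▸ inv_mem (phi_mem_base hg hq)
    rw [vgen_eq_of (by omega)] at hbase
    exact absurd hbase (hnnProd_not_mem_base hL (List.cons_ne_nil _ _))

end C5bar

/-- For g ≥ 3, with w = v_4 (v_5⁻¹ v_6⁻¹ ⋯ v_{2g-1}⁻¹) v_{2g} (v_{2g-1}⁻¹ ⋯ v_6⁻¹ v_5⁻¹) v_4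
in A(C̄_{2g+1}), the map v_1 ↦ v_1, v_2 ↦ v_2, v_3 ↦ v_3, v_4 ↦ w, v_5 ↦ v_{2g+1} defines an
injective homomorphism A(C̄_5) → A(C̄_{2g+1}). -/
theorem raag_C5bar_embeds (g : ℕ) (hg : 3 ≤ g) :
    ∃ φ : RAAG (cycCompl 5) →* RAAG (cycCompl (2 * g + 1)),
      Function.Injective φ ∧
      φ (vgen 5 1) = vgen (2 * g + 1) 1 ∧
      φ (vgen 5 2) = vgen (2 * g + 1) 2 ∧
      φ (vgen 5 3) = vgen (2 * g + 1) 3 ∧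
      φ (vgen 5 4) =
        vgen (2 * g + 1) 4 *
          (((List.range (2 * g - 5)).map fun t => (vgen (2 * g + 1) (5 + t))⁻¹).prod) *
          vgen (2 * g + 1) (2 * g) *
          (((List.range (2 * g - 5)).map fun t => (vgen (2 * g + 1) (2 * g - 1 - t))⁻¹).prod) *
          vgen (2 * g + 1) 4 ∧
      φ (vgen 5 5) = vgen (2 * g + 1) (2 * g + 1) := by
  refine ⟨C5bar.phi g hg, C5bar.phi_injective hg, ?_, ?_, ?_, ?_, ?_⟩ <;>
    rw [C5bar.phi_vgen hg (by norm_num) (by norm_num), C5bar.phiGen]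
  · simp
  · simp
  · simp
  · simp [C5bar.w, C5bar.u_eq_prod g (show 5 ≤ 2 * g by omega), mul_assoc]
  · simp
end

section
/- For every g ≥ 2, the genus-g surface group Π_g has trivial center. -/
open scoped commutatorElement

/-- The single surface-group relator [a_1,b_1]⋯[a_h,b_h], with a_i = inl i and b_i = inr i. -/
def surfaceRels (h : ℕ) : Set (FreeGroup (Fin h ⊕ Fin h)) :=
  {(List.ofFn fun i : Fin h =>
      ⁅(FreeGroup.of (Sum.inl i) : FreeGroup (Fin h ⊕ Fin h)), FreeGroup.of (Sum.inr i)⁆).prod}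

/-- The genus-h surface group Π_h. -/
abbrev SurfaceGroup (h : ℕ) : Type _ := PresentedGroup (surfaceRels h)

/-!
Cutting the surface of genus `m + n` along a curve separating the first `m` handles from the last
`n` exhibits `Π_{m+n}` as an amalgamated product `F_{2m} *_ℤ F_{2n}` of free groups, `ℤ` being
generated by the boundary word `[a₁,b₁]⋯[a_m,b_m]`, which is the inverse of the boundary word on
the other side.

In an amalgam `A *_C B` where `C` has index at least `3` in both factors, the length of the reduced
form of an element is an invariant (normal form theorem). A central `z ∉ C` would contradict this:
if its reduced form begins and ends in the same factor, conjugating by a letter `y` of the other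
factor adds two letters; otherwise `y z` and `z y` have reduced forms of different lengths for a
suitable letter `y` of the first factor. Hence `Z(A *_C B) ≤ C`, and it is trivial once no
nontrivial element of `C` is central in `A`.

For `m, n ≥ 1` the boundary word lies in the commutator subgroup, so `C` has infinite index;
letting the first handle act on `ℚ` by `x ↦ 2x` and `x ↦ x + 1` sends it to `x ↦ x + 1`, so no
nontrivial power of it is trivial or central.
-/

open Function

namespace Monoid.CoprodI.NeWord

variable {ι : Type*} {M : ι → Type*} [∀ i, Monoid (M i)]

theorem toList_eq_cons {i j : ι} (w : NeWord M i j) : w.toList = ⟨i, w.head⟩ :: w.toList.tail :=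
  List.eq_cons_of_mem_head? w.toList_head?

theorem toList_replaceHead {i j : ι} (x : M i) (hx : x ≠ 1) (w : NeWord M i j) :
    (w.replaceHead x hx).toList = ⟨i, x⟩ :: w.toList.tail := by
  induction w with
  | singleton => rfl
  | append w₁ _ _ ih _ =>
    simp [replaceHead, ih, List.tail_append_of_ne_nil w₁.toList_ne_nil]

theorem toList_mulHead {i j : ι} (w : NeWord M i j) (x : M i) (hx : x * w.head ≠ 1) :
    (w.mulHead x hx).toList = ⟨i, x * w.head⟩ :: w.toList.tail :=
  toList_replaceHead _ hx w

theorem map_fst_toList_mulHead {i j : ι} (w : NeWord M i j) (x : M i) (hx : x * w.head ≠ 1) :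
    (w.mulHead x hx).toList.map Sigma.fst = w.toList.map Sigma.fst := by
  rw [toList_mulHead, w.toList_eq_cons]
  rfl

end Monoid.CoprodI.NeWord

theorem Subgroup.IsComplement.eq_one_of_mem_of_mem {G : Type*} [Group G] {S T : Set G}
    (hST : Subgroup.IsComplement S T) (hS : 1 ∈ S) (hT : 1 ∈ T) {g : G} (hgS : g ∈ S)
    (hgT : g ∈ T) : g = 1 :=
  congrArg Subtype.val <| (hST.equiv_fst_eq_self_of_mem_of_one_mem hT hgS).symm.trans
    (hST.equiv_fst_eq_one_of_mem_of_one_mem hS hgT)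

theorem Subgroup.exists_notMem_and_mul_notMem {G : Type*} [Group G] {H : Subgroup G}
    (h1 : H.index ≠ 1) (h2 : H.index ≠ 2) (x : G) : ∃ y, y ∉ H ∧ y * x ∉ H := by
  by_contra! hcover
  by_cases hx : x ∈ H
  · exact h1 <| Subgroup.index_eq_one.mpr <| eq_top_iff.mpr fun y _ =>
      by_contra fun hy => hy ((mul_mem_cancel_right hx).mp (hcover y hy))
  · refine h2 <| Subgroup.index_eq_two_iff.mpr ⟨x, fun y => ?_⟩
    by_cases hy : y ∈ H
    · exact Or.inr ⟨hy, fun hyx => hx ((mul_mem_cancel_left hy).mp hyx)⟩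
    · exact Or.inl ⟨hcover y hy, hy⟩

namespace Monoid.PushoutI

open CoprodI

variable {ι : Type*} {G : ι → Type*} {H : Type*} [∀ i, Group (G i)] [Group H]
  {φ : ∀ i, H →* G i}

theorem Reduced.map_fst_eq_of_prod_eq (hφ : ∀ i, Injective (φ i)) {w₁ w₂ : Word G}
    (h₁ : Reduced φ w₁) (h₂ : Reduced φ w₂)
    (h : (ofCoprodI w₁.prod : PushoutI φ) = ofCoprodI w₂.prod) :
    w₁.toList.map Sigma.fst = w₂.toList.map Sigma.fst := by
  obtain ⟨d⟩ := NormalWord.transversal_nonempty φ hφ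
  obtain ⟨v₁, hv₁, hfst₁⟩ := h₁.exists_normalWord_prod_eq d
  obtain ⟨v₂, hv₂, hfst₂⟩ := h₂.exists_normalWord_prod_eq d
  rw [← hfst₁, ← hfst₂, NormalWord.prod_injective (hv₁.trans (h.trans hv₂.symm))]

theorem Reduced.mulHead {i j : ι} {w : NeWord G i j} (hw : Reduced φ w.toWord) {x : G i}
    (hx : x * w.head ∉ (φ i).range) :
    Reduced φ (w.mulHead x (fun h => hx (h ▸ one_mem _))).toWord := by
  intro g hg
  change g ∈ (w.mulHead x _).toList at hg
  rw [NeWord.toList_mulHead] at hg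
  rcases List.mem_cons.mp hg with rfl | hg
  · exact hx
  · exact hw g (List.mem_of_mem_tail hg)

@[simp]
theorem reduced_singleton_iff {i : ι} {x : G i} (hx : x ≠ 1) :
    Reduced φ (NeWord.singleton x hx).toWord ↔ x ∉ (φ i).range := by
  simp [Reduced, NeWord.toWord]

@[simp]
theorem reduced_append_iff {i j k l : ι} {w₁ : NeWord G i j} {hjk : j ≠ k} {w₂ : NeWord G k l} :
    Reduced φ (w₁.append hjk w₂).toWord ↔ Reduced φ w₁.toWord ∧ Reduced φ w₂.toWord := by
  simp [Reduced, NeWord.toWord, or_imp, forall_and]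

theorem Reduced.head_notMem {i j : ι} {w : NeWord G i j} (hw : Reduced φ w.toWord) :
    w.head ∉ (φ i).range :=
  hw _ (List.mem_of_mem_head? w.toList_head?)

theorem NormalWord.reduced {d : NormalWord.Transversal φ} (v : NormalWord d) :
    Reduced φ v.toWord := fun g hg hrange =>
  v.ne_one g hg <| (d.compl g.1).eq_one_of_mem_of_mem (one_mem _) (d.one_mem g.1) hrange
    (v.normalized g.1 g.2 hg)

theorem mem_range_base_or_exists_reduced_neWord (hφ : ∀ i, Injective (φ i)) (z : PushoutI φ) :
    z ∈ (base φ).range ∨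
      ∃ (i j : ι) (w : NeWord G i j), Reduced φ w.toWord ∧ ofCoprodI w.prod = z := by
  classical
  obtain ⟨d⟩ := NormalWord.transversal_nonempty φ hφ
  obtain ⟨v, rfl⟩ := (NormalWord.equiv (d := d)).symm.surjective z
  by_cases hv : v.toWord = .empty
  · exact Or.inl ⟨v.head, by simp [NormalWord.equiv, NormalWord.prod, hv]⟩
  obtain ⟨i, j, w, hw⟩ := NeWord.of_word _ hv
  have hred : Reduced φ w.toWord := hw ▸ v.reduced
  have hhead : φ i v.head * w.head ∉ (φ i).range := fun h =>
    hred.head_notMem ((mul_mem_cancel_left (MonoidHom.mem_range.mpr ⟨_, rfl⟩)).mp h)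
  refine Or.inr ⟨i, j, _, hred.mulHead hhead, ?_⟩
  change ofCoprodI (w.mulHead _ _).prod = base φ v.head * ofCoprodI v.toWord.prod
  rw [NeWord.mulHead_prod, map_mul, ofCoprodI_of, of_apply_eq_base, NeWord.prod, hw]

theorem center_le_range_base [Nontrivial ι] (hφ : ∀ i, Injective (φ i))
    (hindex₁ : ∀ i, (φ i).range.index ≠ 1) (hindex₂ : ∀ i, (φ i).range.index ≠ 2) :
    Subgroup.center (PushoutI φ) ≤ (base φ).range := by
  intro z hz
  refine (mem_range_base_or_exists_reduced_neWord hφ z).resolve_right ?_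
  rintro ⟨i, j, w, hw, rfl⟩
  have hcomm (k : ι) (y : G k) : of k y * ofCoprodI w.prod = ofCoprodI w.prod * of k y :=
    Subgroup.mem_center_iff.mp hz _
  have ne_one {k : ι} {y : G k} (hy : y ∉ (φ k).range) : y ≠ 1 := fun h => hy (h ▸ one_mem _)
  rcases eq_or_ne i j with rfl | hij
  · obtain ⟨k, hki⟩ := exists_ne i
    obtain ⟨y, hy, -⟩ := Subgroup.exists_notMem_and_mul_notMem (hindex₁ k) (hindex₂ k) 1
    let w' := NeWord.append (.singleton y (ne_one hy)) hki
      (NeWord.append w hki.symm (.singleton y⁻¹ (inv_ne_one.mpr (ne_one hy))))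
    have hred : Reduced φ w'.toWord := by simp [w', hw, hy]
    have hprod : (ofCoprodI w'.prod : PushoutI φ) = ofCoprodI w.prod := by
      simp [w', ← mul_assoc, hcomm k y]
    have hlen := congrArg List.length (hred.map_fst_eq_of_prod_eq hφ hw hprod)
    simp only [w', NeWord.toWord, NeWord.toList, List.map_append, List.map_cons, List.map_nil,
      List.length_append, List.length_cons, List.length_nil, List.length_map] at hlen
    omega
  · obtain ⟨y, hy, hyw⟩ := Subgroup.exists_notMem_and_mul_notMem (hindex₁ i) (hindex₂ i) w.head
    let w₁ := NeWord.append w hij.symm (.singleton y (ne_one hy))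
    have hred : Reduced φ w₁.toWord := by simp [w₁, hw, hy]
    have hprod :
        (ofCoprodI w₁.prod : PushoutI φ) = ofCoprodI (w.mulHead y (ne_one hyw)).prod := by
      simp [w₁, hcomm i y]
    have hlen := congrArg List.length <|
      (hred.map_fst_eq_of_prod_eq hφ (hw.mulHead hyw) hprod).trans (w.map_fst_toList_mulHead y _)
    simp [w₁, NeWord.toWord] at hlen

theorem center_eq_bot [Nontrivial ι] (hφ : ∀ i, Injective (φ i))
    (hindex₁ : ∀ i, (φ i).range.index ≠ 1) (hindex₂ : ∀ i, (φ i).range.index ≠ 2) (i : ι)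
    (hcenter : ∀ h, φ i h ∈ Subgroup.center (G i) → h = 1) :
    Subgroup.center (PushoutI φ) = ⊥ := by
  refine eq_bot_iff.mpr fun z hz => ?_
  obtain ⟨h, rfl⟩ := center_le_range_base hφ hindex₁ hindex₂ hz
  rw [hcenter h (Subgroup.mem_center_iff.mpr fun g => of_injective hφ i ?_), map_one]
  · exact one_mem _
  rw [map_mul, map_mul, of_apply_eq_base]
  exact Subgroup.mem_center_iff.mp hz _

end Monoid.PushoutI

open Multiplicative

theorem Equiv.commutatorElement_mulLeft₀_addRight {K : Type*} [Field K] (a : K) (ha : a ≠ 0)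
    (b : K) : ⁅Equiv.mulLeft₀ a ha, Equiv.addRight b⁆ = Equiv.addRight ((a - 1) * b) := by
  ext x
  simp only [commutatorElement_def, Perm.coe_mul, Perm.coe_inv, comp_apply, mulLeft₀_apply,
    mulLeft₀_symm_apply, coe_addRight, neg_addRight]
  field_simp
  ring

namespace FreeGroup

def surfaceRelator (n : ℕ) : FreeGroup (Fin n ⊕ Fin n) :=
  (List.ofFn fun i : Fin n => ⁅(of (Sum.inl i) : FreeGroup (Fin n ⊕ Fin n)), of (Sum.inr i)⁆).prod

theorem map_surfaceRelator {n : ℕ} {K : Type*} [Group K] (f : FreeGroup (Fin n ⊕ Fin n) →* K) :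
    f (surfaceRelator n) =
      (List.ofFn fun i : Fin n => ⁅f (of (Sum.inl i)), f (of (Sum.inr i))⁆).prod := by
  simp [surfaceRelator, map_list_prod, List.map_ofFn, Function.comp_def, map_commutatorElement]

theorem surfaceRelator_add (m n : ℕ) :
    surfaceRelator (m + n) =
      map (Sum.map (Fin.castAdd n) (Fin.castAdd n)) (surfaceRelator m) *
        map (Sum.map (Fin.natAdd m) (Fin.natAdd m)) (surfaceRelator n) := by
  rw [map_surfaceRelator, map_surfaceRelator, surfaceRelator, List.ofFn_add, List.prod_append]
  rfl

def affineRep (n : ℕ) : FreeGroup (Fin (n + 1) ⊕ Fin (n + 1)) →* Equiv.Perm ℚ :=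
  lift <| Sum.elim (Pi.mulSingle 0 (Equiv.mulLeft₀ 2 two_ne_zero))
    (Pi.mulSingle 0 (Equiv.addRight 1))

theorem affineRep_surfaceRelator (n : ℕ) :
    affineRep n (surfaceRelator (n + 1)) = Equiv.addRight 1 := by
  rw [map_surfaceRelator, List.ofFn_succ]
  norm_num [affineRep, Equiv.commutatorElement_mulLeft₀_addRight]

theorem eq_zero_of_surfaceRelator_zpow_mem_center {n : ℕ} {k : ℤ}
    (hk : surfaceRelator (n + 1) ^ k ∈ Subgroup.center _) : k = 0 := by
  have hcomm := congrArg (affineRep n) (Subgroup.mem_center_iff.mp hk (of (Sum.inl 0)))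
  rw [_root_.map_mul, _root_.map_mul, _root_.map_zpow, affineRep_surfaceRelator,
    Equiv.zsmul_addRight] at hcomm
  have h := DFunLike.congr_fun hcomm 0
  simp only [affineRep, Equiv.Perm.coe_mul, comp_apply, lift_apply_of, Sum.elim_inl,
    Pi.mulSingle_eq_same, Equiv.mulLeft₀_apply, Equiv.coe_addRight, mul_zero, zero_add,
    zsmul_one] at h
  exact_mod_cast (by linarith : (k : ℚ) = 0)

theorem not_isOfFinOrder_surfaceRelator (n : ℕ) : ¬ IsOfFinOrder (surfaceRelator (n + 1)) := by
  rw [isOfFinOrder_iff_zpow_eq_one]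
  rintro ⟨k, hk, hk1⟩
  exact hk (eq_zero_of_surfaceRelator_zpow_mem_center (hk1 ▸ one_mem _))

theorem index_zpowers_surfaceRelator (n : ℕ) :
    (Subgroup.zpowers (surfaceRelator (n + 1))).index = 0 := by
  let ab : FreeGroup (Fin (n + 1) ⊕ Fin (n + 1)) →* Multiplicative ℤ := lift fun _ => ofAdd 1
  have hab : Surjective ab := fun z => ⟨of (Sum.inl 0) ^ z.toAdd, by simp [ab, ← ofAdd_zsmul]⟩
  have hle : Subgroup.zpowers (surfaceRelator (n + 1)) ≤ ab.ker := by
    rw [Subgroup.zpowers_le, MonoidHom.mem_ker, map_surfaceRelator]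
    refine List.prod_eq_one fun x hx => ?_
    obtain ⟨i, rfl⟩ := List.mem_ofFn.mp hx
    exact commutatorElement_eq_one_iff_commute.mpr (Commute.all _ _)
  have hker : ab.ker.index = 0 := by
    rw [Subgroup.index_ker, MonoidHom.range_eq_top.mpr hab, Subgroup.card_top,
      Nat.card_eq_zero_of_infinite]
  simpa [hker] using Subgroup.index_dvd_of_le hle

end FreeGroup

namespace SurfaceGroup

open Monoid PushoutI
open FreeGroup (surfaceRelator surfaceRelator_add)

def amalgamMap (m n : ℕ) :
    ∀ b : Bool, Multiplicative ℤ →* FreeGroup (Fin (cond b m n) ⊕ Fin (cond b m n))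
  | true => zpowersHom _ (surfaceRelator m)
  | false => zpowersHom _ (surfaceRelator n)⁻¹

variable (m n : ℕ)

theorem of_true_surfaceRelator :
    of (φ := amalgamMap m n) true (surfaceRelator m) = base _ (ofAdd 1) := by
  rw [← of_apply_eq_base _ true]
  simp [amalgamMap]

theorem of_false_surfaceRelator :
    of (φ := amalgamMap m n) false (surfaceRelator n) = (base _ (ofAdd 1))⁻¹ := by
  rw [← of_apply_eq_base _ false]
  simp [amalgamMap]

def handleEmbedding : ∀ b : Bool, Fin (cond b m n) → Fin (m + n)
  | true => Fin.castAdd n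
  | false => Fin.natAdd m

def generatorImage : Fin (m + n) ⊕ Fin (m + n) → PushoutI (amalgamMap m n) :=
  Sum.elim
    (Fin.addCases (fun i => of true (.of (Sum.inl i))) (fun j => of false (.of (Sum.inl j))))
    (Fin.addCases (fun i => of true (.of (Sum.inr i))) (fun j => of false (.of (Sum.inr j))))

theorem lift_generatorImage_comp_map (b : Bool) :
    (FreeGroup.lift (generatorImage m n)).comp
      (FreeGroup.map (Sum.map (handleEmbedding m n b) (handleEmbedding m n b))) =
        of (φ := amalgamMap m n) b := by
  ext (i | i) <;> cases b <;> simp [generatorImage, handleEmbedding]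

def toPushoutI : SurfaceGroup (m + n) →* PushoutI (amalgamMap m n) :=
  PresentedGroup.toGroup (f := generatorImage m n) <| by
    rintro _ rfl
    change FreeGroup.lift _ (surfaceRelator (m + n)) = 1
    have h b := DFunLike.congr_fun (lift_generatorImage_comp_map m n b)
    rw [surfaceRelator_add, map_mul]
    refine (congrArg₂ (· * ·) (h true (surfaceRelator m)) (h false (surfaceRelator n))).trans ?_
    rw [of_true_surfaceRelator, of_false_surfaceRelator, mul_inv_cancel]

def factorHom (b : Bool) :
    FreeGroup (Fin (cond b m n) ⊕ Fin (cond b m n)) →* SurfaceGroup (m + n) :=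
  (PresentedGroup.mk _).comp
    (FreeGroup.map (Sum.map (handleEmbedding m n b) (handleEmbedding m n b)))

theorem factorHom_surfaceRelator_mul :
    factorHom m n true (surfaceRelator m) * factorHom m n false (surfaceRelator n) = 1 :=
  calc _ = PresentedGroup.mk (surfaceRels (m + n)) (surfaceRelator (m + n)) := by
        rw [surfaceRelator_add, map_mul]
        rfl
    _ = 1 := PresentedGroup.one_of_mem rfl

theorem toPushoutI_comp_factorHom (b : Bool) :
    (toPushoutI m n).comp (factorHom m n b) = of (φ := amalgamMap m n) b :=
  lift_generatorImage_comp_map m n b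

theorem factorHom_comp_amalgamMap (b : Bool) :
    (factorHom m n b).comp (amalgamMap m n b) =
      zpowersHom _ (factorHom m n true (surfaceRelator m)) := by
  refine MonoidHom.ext_mint ?_
  cases b
  · simp [amalgamMap, eq_inv_of_mul_eq_one_left (factorHom_surfaceRelator_mul m n)]
  · simp [amalgamMap]

def ofPushoutI : PushoutI (amalgamMap m n) →* SurfaceGroup (m + n) :=
  PushoutI.lift (factorHom m n) _ (factorHom_comp_amalgamMap m n)

def equivPushoutI : SurfaceGroup (m + n) ≃* PushoutI (amalgamMap m n) :=
  MonoidHom.toMulEquiv (toPushoutI m n) (ofPushoutI m n)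
    (PresentedGroup.ext fun x => by
      rcases x with i | i <;> induction i using Fin.addCases <;>
        simp [toPushoutI, ofPushoutI, generatorImage] <;> rfl)
    (hom_ext_nonempty fun b => MonoidHom.ext fun x => by
      simpa [ofPushoutI] using DFunLike.congr_fun (toPushoutI_comp_factorHom m n b) x)

theorem amalgamMap_injective (b : Bool) : Injective (amalgamMap (m + 1) (n + 1) b) := by
  cases b
  · exact (injective_zpow_iff_not_isOfFinOrder.mpr <| isOfFinOrder_inv_iff.not.mpr <|
      FreeGroup.not_isOfFinOrder_surfaceRelator n).comp toAdd.injective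
  · exact (injective_zpow_iff_not_isOfFinOrder.mpr <|
      FreeGroup.not_isOfFinOrder_surfaceRelator m).comp toAdd.injective

theorem index_range_amalgamMap (b : Bool) : (amalgamMap (m + 1) (n + 1) b).range.index = 0 := by
  cases b
  · rw [amalgamMap, Subgroup.range_zpowersHom, Subgroup.zpowers_inv,
      FreeGroup.index_zpowers_surfaceRelator]
  · rw [amalgamMap, Subgroup.range_zpowersHom, FreeGroup.index_zpowers_surfaceRelator]

theorem eq_one_of_amalgamMap_mem_center {k : Multiplicative ℤ}
    (hk : amalgamMap (m + 1) n true k ∈ Subgroup.center _) : k = 1 :=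
  toAdd.injective (FreeGroup.eq_zero_of_surfaceRelator_zpow_mem_center hk)

end SurfaceGroup

/-- For every g ≥ 2, the genus-g surface group has trivial center. -/
theorem surfaceGroup_center_trivial (g : ℕ) (hg : 2 ≤ g) :
    Subgroup.center (SurfaceGroup g) = ⊥ := by
  obtain ⟨m, n, rfl⟩ : ∃ m n, g = (m + 1) + (n + 1) := ⟨0, g - 2, by omega⟩
  let e := SurfaceGroup.equivPushoutI (m + 1) (n + 1)
  have hcenter : Subgroup.center (Monoid.PushoutI (SurfaceGroup.amalgamMap (m + 1) (n + 1))) = ⊥ :=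
    Monoid.PushoutI.center_eq_bot (SurfaceGroup.amalgamMap_injective m n)
      (fun b => by simp [SurfaceGroup.index_range_amalgamMap])
      (fun b => by simp [SurfaceGroup.index_range_amalgamMap]) true
      (fun _ => SurfaceGroup.eq_one_of_amalgamMap_mem_center m (n + 1))
  refine eq_bot_iff.mpr fun z hz => ?_
  have hez : e z ∈ Subgroup.center _ := MulEquivClass.apply_mem_center e hz
  rw [hcenter, Subgroup.mem_bot, map_eq_one_iff e e.injective] at hez
  exact hez ▸ one_mem _
end

section
/- For every h ≥ 2, there exists an injective group homomorphism from the genus-h surface group Π_h into the genus-2 surface group Π_2 whose image is a subgroup of index h − 1 in Π_2. -/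
open scoped commutatorElement

/-!
Write `a i`, `b i` (`i = 0, …, n`) for the generators of Π_{n+1} and a₁, b₁, a₂, b₂ for those
of Π₂. The embedding is the n-fold cyclic cover: `a 0 ↦ a₁ⁿ`, `b 0 ↦ b₁`, and for `j < n`,
`a (j+1) ↦ a₁ʲ a₂ a₁⁻ʲ`, `b (j+1) ↦ a₁ʲ b₂ a₁⁻ʲ`. Its image is the kernel of the map
Π₂ → ℤ/n sending a₁ to 1 and the other generators to 0, which has index n.

For injectivity, let α be the automorphism of Π_{n+1} that fixes `a 0`, rotates the handles
`1, …, n` (the last one going to handle `1` conjugated by `a 0`) and sends `b 0` to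
`[a 1, b 1]⁻¹ b 0`. Then αⁿ is conjugation by `a 0`, so in the mapping torus group
Π_{n+1} ⋊_α ℤ the element z = (a 0⁻¹, n) is central; it meets Π_{n+1} trivially. Sending a₁ to
the generator of ℤ and b₁, a₂, b₂ to `b 0`, `a 1`, `b 1` defines a homomorphism
Π₂ → (Π_{n+1} ⋊_α ℤ)/⟨z⟩ whose composite with the cover is the inclusion of Π_{n+1}.
Since the cover intertwines α with conjugation by a₁, it extends to Π_{n+1} ⋊_α ℤ → Π₂ with
the generator of ℤ going to a₁; this extension is onto, which identifies the image of the cover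
with the kernel above.
-/

theorem List.ofFn_comp_val {M : Type*} (f : ℕ → M) (n : ℕ) :
    List.ofFn (fun i : Fin n => f i) = (List.range n).map f := by
  rw [List.ofFn_eq_map, ← List.map_coe_finRange_eq_range, List.map_map]
  rfl

theorem List.prod_range_map_conj_pow {G : Type*} [Group G] (x u : G) (n : ℕ) :
    ((List.range n).map fun j => MulAut.conj (x ^ j) u).prod = (u * x) ^ n * (x ^ n)⁻¹ := by
  induction n with
  | zero => simp
  | succ n ih =>
    rw [List.prod_range_succ, ih, MulAut.conj_apply, pow_succ, pow_succ]
    group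

theorem Fin.exists_eq_val_add_mul {n : ℕ} [NeZero n] (k : ℕ) :
    ∃ (j : Fin n) (q : ℕ), k = j + n * q :=
  ⟨Fin.ofNat n k, k / n, by rw [Fin.val_ofNat, Nat.mod_add_div]⟩

theorem Function.Bijective.of_iterate {α : Type*} {f : α → α} {k : ℕ}
    (h : Function.Bijective f^[k]) (hk : k ≠ 0) : Function.Bijective f := by
  obtain ⟨m, rfl⟩ := Nat.exists_eq_succ_of_ne_zero hk
  exact ⟨(Function.iterate_succ f m ▸ h.1).of_comp, (Function.iterate_succ' f m ▸ h.2).of_comp⟩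

theorem Subgroup.zpowers_normal_of_mem_center {G : Type*} [Group G] {z : G}
    (hz : z ∈ Subgroup.center G) : (Subgroup.zpowers z).Normal :=
  ⟨fun x hx g => by
    rwa [Subgroup.mem_center_iff.mp (Subgroup.zpowers_le.mpr hz hx) g, mul_inv_cancel_right]⟩

theorem MonoidHom.apply_zpow_apply_of_apply_eq_conj {N H : Type*} [Group N] [Group H]
    {α : MulAut N} {f : N →* H} {g : H} (hf : ∀ x, f (α x) = MulAut.conj g (f x)) (k : ℤ)
    (x : N) : f ((α ^ k) x) = MulAut.conj (g ^ k) (f x) := by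
  induction k using Int.induction_on generalizing x with
  | zero => simp
  | succ k ih =>
    rw [zpow_add_one, MulAut.mul_apply, ih, hf, zpow_add_one, map_mul, MulAut.mul_apply]
  | pred k ih =>
    have hinv : f (α⁻¹ x) = MulAut.conj g⁻¹ (f x) := by
      rw [← MulAut.apply_inv_self N α x, hf, MulAut.inv_apply_self, map_inv, MulAut.inv_apply_self]
    rw [zpow_sub_one, MulAut.mul_apply, ih, hinv, zpow_sub_one, map_mul, MulAut.mul_apply]

open SemidirectProduct Multiplicative

abbrev MappingTorus {N : Type*} [Group N] (α : MulAut N) :=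
  N ⋊[zpowersHom (MulAut N) α] Multiplicative ℤ

namespace MappingTorus

variable {N : Type*} [Group N] {α : MulAut N}

theorem conj_inr_inl (k : ℤ) (x : N) :
    MulAut.conj (inr (ofAdd k) : MappingTorus α) (inl x) = inl ((α ^ k) x) := by
  rw [MulAut.conj_apply, ← map_inv, ← inl_aut, zpowersHom_apply, toAdd_ofAdd]

theorem inr_ofAdd_one_pow (k : ℕ) :
    (inr (ofAdd 1) : MappingTorus α) ^ k = inr (ofAdd (k : ℤ)) := by
  rw [← map_pow, ← ofAdd_nsmul, nsmul_one]

def lift {H : Type*} [Group H] (f : N →* H) (g : H) (hf : ∀ x, f (α x) = MulAut.conj g (f x)) :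
    MappingTorus α →* H :=
  SemidirectProduct.lift f (zpowersHom H g) fun u => MonoidHom.ext fun x => by
    simpa [zpowersHom_apply] using MonoidHom.apply_zpow_apply_of_apply_eq_conj hf u.toAdd x

section lift

variable {H : Type*} [Group H] (f : N →* H) (g : H) (hf : ∀ x, f (α x) = MulAut.conj g (f x))

@[simp]
theorem lift_inl (x : N) : lift f g hf (inl x) = f x := SemidirectProduct.lift_inl _ _ _ _

@[simp]
theorem lift_inr (k : ℤ) : lift f g hf (inr (ofAdd k)) = g ^ k := by simp [lift]

end lift

variable (α) in
def twist (t : N) (n : ℤ) : MappingTorus α := inl t⁻¹ * inr (ofAdd n)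

theorem twist_mem_center {t : N} {n : ℤ} (ht : α t = t) (hα : α ^ n = MulAut.conj t) :
    twist α t n ∈ Subgroup.center (MappingTorus α) := by
  have hfix (k : ℤ) : (α ^ k) t = t := by
    have h := Equiv.Perm.zpow_apply_eq_self_of_apply_eq_self (f := MulAut.toPerm N α) ht k
    rwa [← map_zpow] at h
  refine Subgroup.mem_center_iff.mpr fun g => ?_
  ext
  · simp [twist, hα, hfix, MulAut.conj_apply, mul_assoc]
  · simp [twist, mul_comm]

theorem mk_inr_eq_mk_inl (t : N) (n : ℤ) [(Subgroup.zpowers (twist α t n)).Normal] :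
    QuotientGroup.mk' (Subgroup.zpowers (twist α t n)) (inr (ofAdd n)) =
      QuotientGroup.mk' _ (inl t) := by
  refine QuotientGroup.eq.mpr ?_
  convert inv_mem (Subgroup.mem_zpowers (twist α t n)) using 1
  simp [twist]

theorem injective_mk_comp_inl {t : N} {n : ℤ} (hn : n ≠ 0)
    [(Subgroup.zpowers (twist α t n)).Normal] :
    Function.Injective ((QuotientGroup.mk' (Subgroup.zpowers (twist α t n))).comp
      (inl : N →* MappingTorus α)) := by
  refine (injective_iff_map_eq_one _).mpr fun x hx => ?_
  obtain ⟨k, hk⟩ := Subgroup.mem_zpowers_iff.mp ((QuotientGroup.eq_one_iff _).mp hx)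
  have hk0 : k = 0 := by
    have h := congrArg (toAdd ∘ rightHom) hk
    simp only [Function.comp_apply, map_zpow, twist, map_mul, rightHom_inl, rightHom_inr] at h
    simpa [hn] using h
  rw [hk0, zpow_zero] at hk
  exact inl_injective (hk.symm.trans (map_one _).symm)

end MappingTorus

namespace SurfaceGroup

section Presentation

variable {h : ℕ}

def a (i : Fin h) : SurfaceGroup h := PresentedGroup.of (Sum.inl i)

def b (i : Fin h) : SurfaceGroup h := PresentedGroup.of (Sum.inr i)

theorem prod_commutator_eq_one :
    (List.ofFn fun i => ⁅a i, b i⁆ : List (SurfaceGroup h)).prod = 1 := by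
  have hrel : PresentedGroup.mk (surfaceRels h) _ = 1 :=
    (QuotientGroup.eq_one_iff _).mpr (Subgroup.subset_normalClosure (Set.mem_singleton _))
  simp only [map_list_prod, List.map_ofFn, Function.comp_def, map_commutatorElement] at hrel
  exact hrel

variable {G : Type*} [Group G]

def lift (x y : Fin h → G) (hxy : (List.ofFn fun i => ⁅x i, y i⁆).prod = 1) :
    SurfaceGroup h →* G :=
  PresentedGroup.toGroup (f := Sum.elim x y) <| by
    rintro r rfl
    simpa [map_list_prod, List.map_ofFn, Function.comp_def, map_commutatorElement] using hxy

section lift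

variable (x y : Fin h → G) (hxy : (List.ofFn fun i => ⁅x i, y i⁆).prod = 1)

@[simp]
theorem lift_a (i : Fin h) : lift x y hxy (a i) = x i := PresentedGroup.toGroup.of _

@[simp]
theorem lift_b (i : Fin h) : lift x y hxy (b i) = y i := PresentedGroup.toGroup.of _

end lift

theorem hom_ext {f g : SurfaceGroup h →* G} (ha : ∀ i, f (a i) = g (a i))
    (hb : ∀ i, f (b i) = g (b i)) : f = g :=
  PresentedGroup.ext fun | .inl i => ha i | .inr i => hb i

theorem surjective_of_mem_range {f : G →* SurfaceGroup h} (ha : ∀ i, a i ∈ f.range)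
    (hb : ∀ i, b i ∈ f.range) : Function.Surjective f := by
  rw [← MonoidHom.range_eq_top, eq_top_iff, ← PresentedGroup.closure_range_of,
    Subgroup.closure_le]
  rintro _ ⟨i | i, rfl⟩
  exacts [ha i, hb i]

end Presentation

section Shift

variable (n : ℕ) [NeZero n]

/-- `aSeq n k = a (k + 1)` for `k < n`, continued by `aSeq n (k + n) = a 0 * aSeq n k * (a 0)⁻¹`;
`shift n` acts on these sequences by `k ↦ k + 1`. -/
def aSeq (k : ℕ) : SurfaceGroup (n + 1) :=
  MulAut.conj (a 0 ^ (k / n)) (a (Fin.ofNat n k).succ)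

def bSeq (k : ℕ) : SurfaceGroup (n + 1) :=
  MulAut.conj (a 0 ^ (k / n)) (b (Fin.ofNat n k).succ)

variable {n}

theorem aSeq_val (j : Fin n) : aSeq n j = a j.succ := by
  simp [aSeq, Nat.div_eq_of_lt j.isLt]

theorem bSeq_val (j : Fin n) : bSeq n j = b j.succ := by
  simp [bSeq, Nat.div_eq_of_lt j.isLt]

theorem aSeq_add_mul (k q : ℕ) : aSeq n (k + n * q) = MulAut.conj (a 0 ^ q) (aSeq n k) := by
  have hofNat : Fin.ofNat n (k + n * q) = Fin.ofNat n k := by ext; simp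
  rw [aSeq, aSeq, hofNat, Nat.add_mul_div_left _ _ (NeZero.pos n), add_comm (k / n), pow_add,
    map_mul, MulAut.mul_apply]

theorem bSeq_add_mul (k q : ℕ) : bSeq n (k + n * q) = MulAut.conj (a 0 ^ q) (bSeq n k) := by
  have hofNat : Fin.ofNat n (k + n * q) = Fin.ofNat n k := by ext; simp
  rw [bSeq, bSeq, hofNat, Nat.add_mul_div_left _ _ (NeZero.pos n), add_comm (k / n), pow_add,
    map_mul, MulAut.mul_apply]

theorem commutator_aSeq_bSeq_period :
    ⁅aSeq n n, bSeq n n⁆ = MulAut.conj (a 0) ⁅aSeq n 0, bSeq n 0⁆ := by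
  simpa using congrArg₂ (⁅·, ·⁆) (aSeq_add_mul (n := n) 0 1) (bSeq_add_mul (n := n) 0 1)

theorem commutator_mul_prod_commutator_aSeq_bSeq :
    ⁅(a 0 : SurfaceGroup (n + 1)), b 0⁆ *
      ((List.range n).map fun k => ⁅aSeq n k, bSeq n k⁆).prod = 1 := by
  rw [← List.ofFn_comp_val fun k => ⁅aSeq n k, bSeq n k⁆]
  simpa only [aSeq_val, bSeq_val, List.ofFn_succ, List.prod_cons]
    using prod_commutator_eq_one (h := n + 1)

variable (n)

def shift : SurfaceGroup (n + 1) →* SurfaceGroup (n + 1) :=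
  lift (Fin.cons (a 0) fun j => aSeq n (j + 1))
    (Fin.cons (⁅aSeq n 0, bSeq n 0⁆⁻¹ * b 0) fun j => bSeq n (j + 1)) <| by
    simp only [List.ofFn_succ, Fin.cons_zero, Fin.cons_succ, List.prod_cons]
    rw [List.ofFn_comp_val fun k => ⁅aSeq n (k + 1), bSeq n (k + 1)⁆]
    have hshift := List.prod_range_succ' (fun k => ⁅aSeq n k, bSeq n k⁆) n
    rw [List.prod_range_succ, commutator_aSeq_bSeq_period] at hshift
    rw [eq_inv_mul_of_mul_eq hshift.symm,
      eq_inv_of_mul_eq_one_right commutator_mul_prod_commutator_aSeq_bSeq]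
    simp only [MulAut.conj_apply, commutatorElement_def]
    group

variable {n}

@[simp]
theorem shift_a_zero : shift n (a 0) = a 0 := by simp [shift]

theorem shift_b_zero : shift n (b 0) = ⁅aSeq n 0, bSeq n 0⁆⁻¹ * b 0 := by simp [shift]

theorem shift_a_succ (j : Fin n) : shift n (a j.succ) = aSeq n (j + 1) := by simp [shift]

theorem shift_b_succ (j : Fin n) : shift n (b j.succ) = bSeq n (j + 1) := by simp [shift]

theorem shift_conj_a_zero_pow (q : ℕ) (x : SurfaceGroup (n + 1)) :
    shift n (MulAut.conj (a 0 ^ q) x) = MulAut.conj (a 0 ^ q) (shift n x) := by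
  rw [MulAut.conj_apply, MulAut.conj_apply, map_mul, map_mul, map_inv, map_pow, shift_a_zero]

theorem shift_aSeq (k : ℕ) : shift n (aSeq n k) = aSeq n (k + 1) := by
  obtain ⟨j, q, rfl⟩ := Fin.exists_eq_val_add_mul (n := n) k
  rw [aSeq_add_mul, add_right_comm, aSeq_add_mul, shift_conj_a_zero_pow, aSeq_val, shift_a_succ]

theorem shift_bSeq (k : ℕ) : shift n (bSeq n k) = bSeq n (k + 1) := by
  obtain ⟨j, q, rfl⟩ := Fin.exists_eq_val_add_mul (n := n) k
  rw [bSeq_add_mul, add_right_comm, bSeq_add_mul, shift_conj_a_zero_pow, bSeq_val, shift_b_succ]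

theorem shift_iterate_aSeq (j k : ℕ) : (shift n)^[j] (aSeq n k) = aSeq n (k + j) := by
  induction j with
  | zero => rfl
  | succ j ih => rw [Function.iterate_succ_apply', ih, shift_aSeq, add_assoc]

theorem shift_iterate_bSeq (j k : ℕ) : (shift n)^[j] (bSeq n k) = bSeq n (k + j) := by
  induction j with
  | zero => rfl
  | succ j ih => rw [Function.iterate_succ_apply', ih, shift_bSeq, add_assoc]

theorem shift_iterate_b_zero (k : ℕ) :
    (shift n)^[k] (b 0) = ((List.range k).map fun i => ⁅aSeq n i, bSeq n i⁆).prod⁻¹ * b 0 := by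
  induction k with
  | zero => simp
  | succ k ih =>
    rw [Function.iterate_succ_apply', ih, map_mul, map_inv, shift_b_zero, map_list_prod,
      List.map_map, List.prod_range_succ']
    simp only [Function.comp_def, map_commutatorElement, shift_aSeq, shift_bSeq]
    group

theorem shift_iterate_period (x : SurfaceGroup (n + 1)) :
    (shift n)^[n] x = MulAut.conj (a 0) x := by
  -- powers in `Monoid.End` are iterates, so `hom_ext` can check this on generators
  suffices h : (show Monoid.End (SurfaceGroup (n + 1)) from shift n) ^ n =
      (MulAut.conj (a 0)).toMonoidHom from DFunLike.congr_fun h x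
  have hperiod (k : ℕ) : k + n = k + n * 1 := by rw [mul_one]
  refine hom_ext (fun i => ?_) (fun i => ?_) <;>
    change (shift n)^[n] _ = MulAut.conj (a 0) _ <;> cases i using Fin.cases
  case zero => rw [Function.iterate_fixed shift_a_zero, MulAut.conj_apply, mul_inv_cancel_right]
  case succ j => rw [← aSeq_val, shift_iterate_aSeq, hperiod, aSeq_add_mul, pow_one]
  case zero =>
    rw [shift_iterate_b_zero,
      eq_inv_of_mul_eq_one_right commutator_mul_prod_commutator_aSeq_bSeq, inv_inv,
      MulAut.conj_apply, commutatorElement_def]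
    group
  case succ j => rw [← bSeq_val, shift_iterate_bSeq, hperiod, bSeq_add_mul, pow_one]

theorem shift_bijective : Function.Bijective (shift n) := by
  have hconj : Function.Bijective (shift n)^[n] := by
    simpa only [funext shift_iterate_period] using (MulAut.conj (a 0)).bijective
  exact hconj.of_iterate (NeZero.ne n)

variable (n)

noncomputable def shiftEquiv : MulAut (SurfaceGroup (n + 1)) :=
  MulEquiv.ofBijective (shift n) shift_bijective

variable {n}

theorem shiftEquiv_apply (x : SurfaceGroup (n + 1)) : shiftEquiv n x = shift n x := rfl

theorem shiftEquiv_pow_apply (k : ℕ) (x : SurfaceGroup (n + 1)) :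
    (shiftEquiv n ^ k) x = (shift n)^[k] x := by
  induction k with
  | zero => rfl
  | succ k ih => rw [pow_succ', MulAut.mul_apply, ih, Function.iterate_succ_apply']; rfl

theorem shiftEquiv_zpow_period : shiftEquiv n ^ (n : ℤ) = MulAut.conj (a 0) :=
  MulEquiv.ext fun x => by rw [zpow_natCast, shiftEquiv_pow_apply, shift_iterate_period]

end Shift

section GenusTwo

local notation "a₁" => (a 0 : SurfaceGroup 2)
local notation "b₁" => (b 0 : SurfaceGroup 2)
local notation "a₂" => (a 1 : SurfaceGroup 2)
local notation "b₂" => (b 1 : SurfaceGroup 2)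

theorem commutator_mul_commutator_eq_one : ⁅a₁, b₁⁆ * ⁅a₂, b₂⁆ = 1 := by
  simpa using prod_commutator_eq_one (h := 2)

theorem commutator_mul_a_eq_conj : ⁅a₂, b₂⁆ * a₁ = MulAut.conj b₁ a₁ := by
  rw [eq_inv_of_mul_eq_one_right commutator_mul_commutator_eq_one, commutatorElement_inv,
    MulAut.conj_apply, commutatorElement_def]
  group

theorem prod_range_map_conj_pow_commutator (n : ℕ) :
    ((List.range n).map fun j => MulAut.conj (a₁ ^ j) ⁅a₂, b₂⁆).prod = ⁅b₁, a₁ ^ n⁆ := by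
  rw [List.prod_range_map_conj_pow, commutator_mul_a_eq_conj, ← map_pow, MulAut.conj_apply,
    commutatorElement_def]

def cyclicCover (n : ℕ) : SurfaceGroup (n + 1) →* SurfaceGroup 2 :=
  lift (Fin.cons (a₁ ^ n) fun j => MulAut.conj (a₁ ^ (j : ℕ)) a₂)
    (Fin.cons b₁ fun j => MulAut.conj (a₁ ^ (j : ℕ)) b₂) <| by
    simp only [List.ofFn_succ, Fin.cons_zero, Fin.cons_succ, List.prod_cons,
      ← map_commutatorElement]
    rw [List.ofFn_comp_val (fun j => MulAut.conj (a₁ ^ j) ⁅a₂, b₂⁆),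
      prod_range_map_conj_pow_commutator, ← commutatorElement_inv, inv_mul_cancel]

variable {n : ℕ}

theorem cyclicCover_a_zero : cyclicCover n (a 0) = a₁ ^ n := by simp [cyclicCover]

theorem cyclicCover_b_zero : cyclicCover n (b 0) = b₁ := by simp [cyclicCover]

theorem cyclicCover_a_succ (j : Fin n) :
    cyclicCover n (a j.succ) = MulAut.conj (a₁ ^ (j : ℕ)) a₂ := by simp [cyclicCover]

theorem cyclicCover_b_succ (j : Fin n) :
    cyclicCover n (b j.succ) = MulAut.conj (a₁ ^ (j : ℕ)) b₂ := by simp [cyclicCover]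

theorem cyclicCover_conj_a_zero_pow (q : ℕ) (x : SurfaceGroup (n + 1)) :
    cyclicCover n (MulAut.conj (a 0 ^ q) x) = MulAut.conj (a₁ ^ (n * q)) (cyclicCover n x) := by
  rw [MulAut.conj_apply, MulAut.conj_apply, map_mul, map_mul, map_inv, map_pow, cyclicCover_a_zero,
    pow_mul]

variable (n) in
def coverDegree : SurfaceGroup 2 →* Multiplicative (ZMod n) :=
  lift ![ofAdd 1, 1] ![1, 1] <| by simp

theorem coverDegree_a_zero_pow (k : ℤ) : coverDegree n (a₁ ^ k) = ofAdd (k : ZMod n) := by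
  simp [coverDegree, ← ofAdd_zsmul]

theorem coverDegree_cyclicCover (x : SurfaceGroup (n + 1)) :
    coverDegree n (cyclicCover n x) = 1 := by
  suffices h : (coverDegree n).comp (cyclicCover n) = 1 from DFunLike.congr_fun h x
  refine hom_ext (fun i => ?_) (fun i => ?_) <;>
    simp only [MonoidHom.comp_apply, MonoidHom.one_apply] <;> cases i using Fin.cases
  case zero => simp [cyclicCover_a_zero, coverDegree, ← ofAdd_nsmul]
  case succ j => rw [cyclicCover_a_succ, MulAut.conj_apply]; simp [coverDegree]
  case zero => simp [cyclicCover_b_zero, coverDegree]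
  case succ j => rw [cyclicCover_b_succ, MulAut.conj_apply]; simp [coverDegree]

variable [NeZero n]

theorem cyclicCover_aSeq (k : ℕ) : cyclicCover n (aSeq n k) = MulAut.conj (a₁ ^ k) a₂ := by
  obtain ⟨j, q, rfl⟩ := Fin.exists_eq_val_add_mul (n := n) k
  rw [aSeq_add_mul, cyclicCover_conj_a_zero_pow, aSeq_val, cyclicCover_a_succ, ← MulAut.mul_apply,
    ← map_mul, ← pow_add, add_comm]

theorem cyclicCover_bSeq (k : ℕ) : cyclicCover n (bSeq n k) = MulAut.conj (a₁ ^ k) b₂ := by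
  obtain ⟨j, q, rfl⟩ := Fin.exists_eq_val_add_mul (n := n) k
  rw [bSeq_add_mul, cyclicCover_conj_a_zero_pow, bSeq_val, cyclicCover_b_succ, ← MulAut.mul_apply,
    ← map_mul, ← pow_add, add_comm]

theorem cyclicCover_shift (x : SurfaceGroup (n + 1)) :
    cyclicCover n (shift n x) = MulAut.conj a₁ (cyclicCover n x) := by
  suffices h : (cyclicCover n).comp (shift n) = (MulAut.conj a₁).toMonoidHom.comp (cyclicCover n)
    from DFunLike.congr_fun h x
  refine hom_ext (fun i => ?_) (fun i => ?_) <;>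
    simp only [MonoidHom.comp_apply, MulEquiv.coe_toMonoidHom] <;> cases i using Fin.cases
  case zero =>
    rw [shift_a_zero, cyclicCover_a_zero, MulAut.conj_apply, (Commute.self_pow _ _).eq,
      mul_inv_cancel_right]
  case succ j =>
    rw [shift_a_succ, cyclicCover_aSeq, cyclicCover_a_succ, pow_succ', map_mul, MulAut.mul_apply]
  case zero =>
    rw [shift_b_zero, map_mul, map_inv, map_commutatorElement, cyclicCover_aSeq, cyclicCover_bSeq,
      cyclicCover_b_zero, pow_zero, map_one, MulAut.one_apply, MulAut.one_apply,
      inv_eq_of_mul_eq_one_left commutator_mul_commutator_eq_one, MulAut.conj_apply,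
      commutatorElement_def]
    group
  case succ j =>
    rw [shift_b_succ, cyclicCover_bSeq, cyclicCover_b_succ, pow_succ', map_mul, MulAut.mul_apply]

instance : (Subgroup.zpowers (MappingTorus.twist (shiftEquiv n) (a 0) n)).Normal :=
  Subgroup.zpowers_normal_of_mem_center
    (MappingTorus.twist_mem_center (shiftEquiv_apply (a 0)) shiftEquiv_zpow_period)

variable (n) in
abbrev CoverQuotient :=
  MappingTorus (shiftEquiv n) ⧸ Subgroup.zpowers (MappingTorus.twist (shiftEquiv n) (a 0) n)

local notation "τ" => (inr (ofAdd 1) : MappingTorus (shiftEquiv n))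

theorem conj_inr_pow_inl_aSeq (j : ℕ) :
    MulAut.conj (τ ^ j) (inl (aSeq n 0)) = inl (aSeq n j) := by
  rw [MappingTorus.inr_ofAdd_one_pow, MappingTorus.conj_inr_inl, zpow_natCast,
    shiftEquiv_pow_apply, shift_iterate_aSeq, zero_add]

theorem conj_inr_pow_inl_bSeq (j : ℕ) :
    MulAut.conj (τ ^ j) (inl (bSeq n 0)) = inl (bSeq n j) := by
  rw [MappingTorus.inr_ofAdd_one_pow, MappingTorus.conj_inr_inl, zpow_natCast,
    shiftEquiv_pow_apply, shift_iterate_bSeq, zero_add]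

theorem commutator_inr_inl_b_zero :
    (⁅τ, inl (b 0)⁆ : MappingTorus (shiftEquiv n)) = (inl ⁅aSeq n 0, bSeq n 0⁆)⁻¹ := by
  rw [commutatorElement_def, ← MulAut.conj_apply, MappingTorus.conj_inr_inl, zpow_one,
    shiftEquiv_apply, shift_b_zero, ← map_inv, ← map_mul, mul_inv_cancel_right, map_inv]

variable (n) in
noncomputable def toCoverQuotient : SurfaceGroup 2 →* CoverQuotient n :=
  lift ![QuotientGroup.mk' _ τ, QuotientGroup.mk' _ (inl (aSeq n 0))]
    ![QuotientGroup.mk' _ (inl (b 0)), QuotientGroup.mk' _ (inl (bSeq n 0))] <| by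
    simp only [List.ofFn_succ, List.ofFn_zero, Matrix.cons_val_zero, Matrix.cons_val_succ,
      List.prod_cons, List.prod_nil, mul_one]
    rw [← map_commutatorElement, ← map_commutatorElement, ← map_commutatorElement,
      commutator_inr_inl_b_zero, ← map_mul, inv_mul_cancel, map_one]

theorem toCoverQuotient_comp_cyclicCover :
    (toCoverQuotient n).comp (cyclicCover n) = (QuotientGroup.mk' _).comp inl := by
  refine hom_ext (fun i => ?_) (fun i => ?_) <;>
    simp only [MonoidHom.comp_apply] <;> cases i using Fin.cases
  case zero =>
    rw [cyclicCover_a_zero, ← MappingTorus.mk_inr_eq_mk_inl, ← MappingTorus.inr_ofAdd_one_pow,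
      map_pow, map_pow]
    simp [toCoverQuotient]
  case succ j =>
    rw [cyclicCover_a_succ, ← aSeq_val, ← conj_inr_pow_inl_aSeq, MulAut.conj_apply,
      MulAut.conj_apply]
    simp [toCoverQuotient]
  case zero => simp [cyclicCover_b_zero, toCoverQuotient]
  case succ j =>
    rw [cyclicCover_b_succ, ← bSeq_val, ← conj_inr_pow_inl_bSeq, MulAut.conj_apply,
      MulAut.conj_apply]
    simp [toCoverQuotient]

theorem cyclicCover_injective : Function.Injective (cyclicCover n) := by
  refine Function.Injective.of_comp (f := toCoverQuotient n) ?_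
  rw [← MonoidHom.coe_comp, toCoverQuotient_comp_cyclicCover]
  exact MappingTorus.injective_mk_comp_inl (Nat.cast_ne_zero.mpr (NeZero.ne n))

variable (n) in
noncomputable def cyclicCoverLift : MappingTorus (shiftEquiv n) →* SurfaceGroup 2 :=
  MappingTorus.lift (cyclicCover n) a₁ fun x => by rw [shiftEquiv_apply, cyclicCover_shift]

theorem cyclicCoverLift_surjective : Function.Surjective (cyclicCoverLift n) := by
  refine surjective_of_mem_range (fun i => ?_) (fun i => ?_) <;> fin_cases i
  · exact ⟨τ, by simp [cyclicCoverLift]⟩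
  · refine ⟨inl (a (0 : Fin n).succ), ?_⟩
    rw [cyclicCoverLift, MappingTorus.lift_inl, cyclicCover_a_succ]
    simp
  · exact ⟨inl (b 0), by simp [cyclicCoverLift, cyclicCover_b_zero]⟩
  · refine ⟨inl (b (0 : Fin n).succ), ?_⟩
    rw [cyclicCoverLift, MappingTorus.lift_inl, cyclicCover_b_succ]
    simp

theorem coverDegree_surjective : Function.Surjective (coverDegree n) := fun y =>
  ⟨a₁ ^ ((toAdd y).val : ℤ), by
    rw [coverDegree_a_zero_pow, Int.cast_natCast, ZMod.natCast_zmod_val, ofAdd_toAdd]⟩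

theorem range_cyclicCover : (cyclicCover n).range = (coverDegree n).ker := by
  refine le_antisymm ?_ fun g hg => ?_
  · rintro _ ⟨x, rfl⟩
    exact coverDegree_cyclicCover x
  obtain ⟨x, rfl⟩ := cyclicCoverLift_surjective (n := n) g
  obtain ⟨y, k, rfl⟩ : ∃ y k, x = inl y * inr (ofAdd k) :=
    ⟨x.left, toAdd x.right, (inl_left_mul_inr_right x).symm⟩
  simp only [cyclicCoverLift, map_mul, MappingTorus.lift_inl, MappingTorus.lift_inr] at hg ⊢
  rw [MonoidHom.mem_ker, map_mul, coverDegree_cyclicCover, one_mul, coverDegree_a_zero_pow] at hg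
  obtain ⟨q, rfl⟩ := (ZMod.intCast_zmod_eq_zero_iff_dvd k n).mp (ofAdd_eq_one.mp hg)
  exact ⟨y * a 0 ^ q, by rw [map_mul, map_zpow, cyclicCover_a_zero, ← zpow_natCast, ← zpow_mul]⟩

theorem index_range_cyclicCover : (cyclicCover n).range.index = n := by
  rw [range_cyclicCover, Subgroup.index_ker, (coverDegree n).range_eq_top_of_surjective
    coverDegree_surjective, Subgroup.card_top]
  simp

end GenusTwo

end SurfaceGroup

/-- For every h ≥ 2, the genus-h surface group embeds into the genus-2 surface group
with image a subgroup of index h - 1. -/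
theorem surfaceGroup_embeds_finite_index (h : ℕ) (hh : 2 ≤ h) :
    ∃ φ : SurfaceGroup h →* SurfaceGroup 2,
      Function.Injective φ ∧ φ.range.index = h - 1 := by
  obtain ⟨n, rfl⟩ : ∃ n, h = n + 1 := ⟨h - 1, by omega⟩
  have : NeZero n := ⟨by omega⟩
  exact ⟨SurfaceGroup.cyclicCover n, SurfaceGroup.cyclicCover_injective,
    SurfaceGroup.index_range_cyclicCover⟩
end

section
/- Let p be a prime, let A be a finitely generated abelian group that can be generated by m elements, and suppose that the quotient A/pA, viewed as a vector space over the field with p elements, has dimension m. If A contains a nonzero element of finite order, then A contains an element of order exactly p. -/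
/-!
If `A` has no element of order `p`, multiplication by `p` is injective on `A`. The generators
give a surjection `σ : ℤ^m → A`; reducing mod `p` gives a surjection `(ℤ/p)^m → A/pA` between
spaces of the same dimension, hence an isomorphism, so `σ v ∈ pA` forces `p ∣ v`. Thus every
`v ∈ ker σ` is `p • w` with `p • σ w = 0`, i.e. `w ∈ ker σ`; so `ker σ ⊆ ⋂ₖ pᵏ ℤ^m = 0` and
`A ≅ ℤ^m` is torsion-free.
-/

open Function Module

theorem Int.eq_zero_of_forall_pow_dvd {a n : ℤ} (ha : a.natAbs ≠ 1) (h : ∀ k : ℕ, a ^ k ∣ n) :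
    n = 0 := by
  by_contra hn
  obtain ⟨k, hk⟩ : FiniteMultiplicity a n := Int.finiteMultiplicity_iff.mpr ⟨ha, hn⟩
  exact hk (h (k + 1))

section

variable {A : Type*} [AddCommGroup A] {ι : Type*} [Fintype ι] {s : ι → A} {p : ℕ}
  [Fact p.Prime] {pA : AddSubgroup A} [Module (ZMod p) (A ⧸ pA)]

theorem eq_zero_of_nsmul_eq_zero_of_forall_addOrderOf_ne (h : ∀ y : A, addOrderOf y ≠ p) {a : A}
    (ha : p • a = 0) : a = 0 := by
  rcases (Fact.out : p.Prime).eq_one_or_self_of_dvd _ (addOrderOf_dvd_of_nsmul_eq_zero ha) with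
    h1 | hp
  · exact AddMonoid.addOrderOf_eq_one_iff.mp h1
  · exact absurd hp (h a)

theorem surjective_linearCombination_of_closure_eq_top
    (hs : AddSubgroup.closure (Set.range s) = ⊤) :
    Surjective (Fintype.linearCombination ℤ s) := by
  rw [← span_range_eq_top_iff_surjective_fintypeLinearCombination, ← Submodule.toAddSubgroup_inj,
    Submodule.span_int_eq_addSubgroupClosure, hs, Submodule.top_toAddSubgroup]

theorem dvd_of_linearCombination_mem (hs : AddSubgroup.closure (Set.range s) = ⊤)
    (hdim : finrank (ZMod p) (A ⧸ pA) = Fintype.card ι) {v : ι → ℤ}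
    (hv : Fintype.linearCombination ℤ s v ∈ pA) (i : ι) : (p : ℤ) ∣ v i := by
  set g := Fintype.linearCombination (ZMod p) (fun i => (QuotientAddGroup.mk (s i) : A ⧸ pA))
  have hg : ∀ w : ι → ℤ, g (fun i => (w i : ZMod p)) =
      (Fintype.linearCombination ℤ s w : A ⧸ pA) := by
    intro w
    simp [g, Fintype.linearCombination_apply, Int.cast_smul_eq_zsmul]
  have hsurj : Surjective g := by
    rintro ⟨a⟩
    obtain ⟨w, rfl⟩ := surjective_linearCombination_of_closure_eq_top hs a
    exact ⟨_, hg w⟩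
  have : FiniteDimensional (ZMod p) (A ⧸ pA) := Module.Finite.of_surjective g hsurj
  have hinj : Injective g :=
    (LinearMap.injective_iff_surjective_of_finrank_eq_finrank (by simp [hdim])).mpr hsurj
  have hv0 : (fun i => (v i : ZMod p)) = 0 :=
    hinj (by rw [hg, map_zero, QuotientAddGroup.eq_zero_iff]; exact hv)
  exact (ZMod.intCast_zmod_eq_zero_iff_dvd _ p).mp (congrFun hv0 i)

theorem injective_linearCombination_of_finrank_eq_card
    (hs : AddSubgroup.closure (Set.range s) = ⊤)
    (hdim : finrank (ZMod p) (A ⧸ pA) = Fintype.card ι) (hA : ∀ a : A, p • a = 0 → a = 0) :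
    Injective (Fintype.linearCombination ℤ s) := by
  have hdesc : ∀ (k : ℕ) (v : ι → ℤ), Fintype.linearCombination ℤ s v = 0 →
      ∀ i, (p : ℤ) ^ k ∣ v i := by
    intro k
    induction k with
    | zero => simp
    | succ k ih =>
      intro v hv i
      choose w hw using dvd_of_linearCombination_mem hs hdim (hv ▸ pA.zero_mem)
      have hvw : v = (p : ℤ) • w := funext hw
      have hw0 : Fintype.linearCombination ℤ s w = 0 := by
        refine hA _ ?_
        rw [← natCast_zsmul, ← map_smul, ← hvw, hv]
      rw [hw, pow_succ']
      exact mul_dvd_mul_left _ (ih w hw0 i)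
  refine (injective_iff_map_eq_zero _).mpr fun v hv => funext fun i => ?_
  exact Int.eq_zero_of_forall_pow_dvd (by simpa using (Fact.out : p.Prime).ne_one)
    fun k => hdesc k v hv i

theorem isAddTorsionFree_of_finrank_eq_card (hs : AddSubgroup.closure (Set.range s) = ⊤)
    (hdim : finrank (ZMod p) (A ⧸ pA) = Fintype.card ι) (hA : ∀ a : A, p • a = 0 → a = 0) :
    IsAddTorsionFree A :=
  let e := LinearEquiv.ofBijective (Fintype.linearCombination ℤ s)
    ⟨injective_linearCombination_of_finrank_eq_card hs hdim hA,
      surjective_linearCombination_of_closure_eq_top hs⟩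
  e.symm.injective.isAddTorsionFree e.symm.toLinearMap.toAddMonoidHom

end

/-- Let p be prime and let A be a finitely generated abelian group generated by m elements
such that A/pA has dimension m as a vector space over the field with p elements. If A has a
nonzero element of finite order, then A has an element of order exactly p. -/
theorem exists_elem_of_order_p (p : ℕ) (hp : p.Prime) {A : Type*} [AddCommGroup A]
    (m : ℕ) (S : Finset A) (hScard : S.card = m)
    (hSgen : AddSubgroup.closure (S : Set A) = ⊤)
    (pA : AddSubgroup A) (hpA : pA = AddSubgroup.closure {x : A | ∃ a : A, x = p • a})
    (hdim :
      letI : Module (ZMod p) (A ⧸ pA) := QuotientAddGroup.zmodModule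
        (by intro x; rw [hpA]; exact AddSubgroup.subset_closure ⟨x, rfl⟩)
      Module.finrank (ZMod p) (A ⧸ pA) = m)
    (htor : ∃ x : A, x ≠ 0 ∧ IsOfFinAddOrder x) :
    ∃ y : A, addOrderOf y = p := by
  by_contra! hcon
  have : Fact p.Prime := ⟨hp⟩
  let : Module (ZMod p) (A ⧸ pA) := QuotientAddGroup.zmodModule
    (by intro x; rw [hpA]; exact AddSubgroup.subset_closure ⟨x, rfl⟩)
  have : IsAddTorsionFree A := isAddTorsionFree_of_finrank_eq_card (s := ((↑) : S → A))
    (by rwa [Subtype.range_coe]) (by rwa [Fintype.card_coe, hScard])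
    fun _ => eq_zero_of_nsmul_eq_zero_of_forall_addOrderOf_ne hcon
  obtain ⟨x, hx0, hx⟩ := htor
  exact not_isOfFinAddOrder_of_isAddTorsionFree hx0 hx
end
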